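/- arXiv:1102.1950 — 9 statements merged into one kernel-verified Lean document; each statement's English description precedes it below -/
import Mathlib

section
/- Let X be a metric space with finite packing number P(t) for some t > 0. Then for every n there exists a list of n points (x_1,…,x_n) in X such that the number of ordered pairs (i,j), i ≠ j, with d(x_i,x_j) ≤ t is at most n·(n/P(t) + 1). -/
/-- If the packing number `P` of `X` at scale `t` is attained by some maximal
`t`-separated set, then for every `n` there is a list of `n` points with at most
`n * (n / P + 1)` ordered pairs of distinct indices at distance at most `t`. -/
theorem stmt1 {X : Type*} [MetricSpace X] (t : ℝ) (ht : 0 < t) (P : ℕ) (hP : 0 < P)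
    (hpack : ∀ S : Finset X, (∀ x ∈ S, ∀ y ∈ S, x ≠ y → t < dist x y) → S.card ≤ P)
    (hattain : ∃ S : Finset X, (∀ x ∈ S, ∀ y ∈ S, x ≠ y → t < dist x y) ∧ S.card = P)
    (n : ℕ) :
    ∃ x : Fin n → X,
      ((Finset.univ.filter
        (fun p : Fin n × Fin n => p.1 ≠ p.2 ∧ dist (x p.1) (x p.2) ≤ t)).card : ℝ) ≤
      (n : ℝ) * ((n : ℝ) / (P : ℝ) + 1) := by
  obtain ⟨S, hSsep, hScard⟩ := hattain
  set s : Fin P → X := fun i => (S.equivFin.symm ⟨i.val, by rw [hScard]; exact i.isLt⟩ : X)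
    with hs
  have hsmem : ∀ i, s i ∈ S := fun i => (S.equivFin.symm _).2
  have hsinj : Function.Injective s := by
    intro a b hab
    have := Subtype.coe_injective hab
    have h3 : a.val = b.val := by
      have := S.equivFin.symm.injective this
      simpa using congrArg Fin.val this
    exact Fin.ext h3
  refine ⟨fun i => s ⟨i.val % P, Nat.mod_lt _ hP⟩, ?_⟩
  set x : Fin n → X := fun i => s ⟨i.val % P, Nat.mod_lt _ hP⟩ with hx
  -- bad pairs have equal residues
  have hsubset : (Finset.univ.filter
        (fun p : Fin n × Fin n => p.1 ≠ p.2 ∧ dist (x p.1) (x p.2) ≤ t)) ⊆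
      Finset.univ.filter (fun p : Fin n × Fin n => p.1.val % P = p.2.val % P) := by
    intro p hp
    simp only [Finset.mem_filter, Finset.mem_univ, true_and] at hp ⊢
    by_contra hne
    have hne' : (⟨p.1.val % P, Nat.mod_lt _ hP⟩ : Fin P) ≠ ⟨p.2.val % P, Nat.mod_lt _ hP⟩ := by
      intro h; exact hne (congrArg Fin.val h)
    have : t < dist (x p.1) (x p.2) :=
      hSsep _ (hsmem _) _ (hsmem _) (fun h => hne' (hsinj h))
    linarith [hp.2]
  have hcount : ∀ r : ℕ, (Finset.univ.filter (fun j : Fin n => j.val % P = r)).card ≤ n / P + 1 := by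
    intro r
    have : (Finset.univ.filter (fun j : Fin n => j.val % P = r)).card ≤
        (Finset.range (n / P + 1)).card := by
      apply Finset.card_le_card_of_injOn (fun j => j.val / P)
      · intro j _
        simp only [Finset.mem_coe, Finset.mem_range]
        exact Nat.lt_succ_of_le (Nat.div_le_div_right (le_of_lt j.isLt))
      · intro a ha b hb hab
        simp only [Finset.mem_coe, Finset.mem_filter, Finset.mem_univ, true_and] at ha hb
        apply Fin.ext
        have hab' : a.val / P = b.val / P := hab
        rw [← Nat.div_add_mod a.val P, ← Nat.div_add_mod b.val P, ha, hb, hab']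
    simpa using this
  have hnat : (Finset.univ.filter
        (fun p : Fin n × Fin n => p.1.val % P = p.2.val % P)).card ≤ n * (n / P + 1) := by
    have heq : (Finset.univ.filter
        (fun p : Fin n × Fin n => p.1.val % P = p.2.val % P)).card =
        ∑ i : Fin n, (Finset.univ.filter (fun j : Fin n => j.val % P = i.val % P)).card := by
      rw [Finset.card_filter, Fintype.sum_prod_type]
      congr 1
      ext i
      rw [Finset.card_filter]
      congr 1
      ext j
      by_cases h : i.val % P = j.val % P <;> simp [h, eq_comm]
    rw [heq]
    calc ∑ i : Fin n, (Finset.univ.filter (fun j : Fin n => j.val % P = i.val % P)).card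
        ≤ ∑ _i : Fin n, (n / P + 1) := Finset.sum_le_sum (fun i _ => hcount _)
      _ = n * (n / P + 1) := by simp [Finset.sum_const, mul_comm]
  have h1 : ((Finset.univ.filter
        (fun p : Fin n × Fin n => p.1 ≠ p.2 ∧ dist (x p.1) (x p.2) ≤ t)).card : ℝ) ≤
      ((n * (n / P + 1) : ℕ) : ℝ) := by
    exact_mod_cast le_trans (Finset.card_le_card hsubset) hnat
  refine h1.trans ?_
  push_cast
  have hdiv : ((n / P : ℕ) : ℝ) ≤ (n : ℝ) / (P : ℝ) := Nat.cast_div_le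
  have : (0:ℝ) ≤ (n:ℝ) := Nat.cast_nonneg n
  nlinarith
end

section
/- Let G be a vector space of real-valued functions on a set 𝒳 containing the constants, χ : 𝒳 → [0,∞) a nonnegative function, and Φ : G → ℝ linear. If r = sup{Φ(g) : g ∈ G, g ≤ χ} is finite, then the extension of Φ to G + ℝχ defined by Φ(g + λχ) = Φ(g) + λr is a positive linear functional, i.e. Φ(v) ≥ 0 whenever v ∈ G + ℝχ satisfies v ≥ 0 pointwise. -/
/-- If `r = sup {Φ g : g ∈ G, g ≤ χ}` is finite (i.e. is a least upper bound in ℝ),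
then the extension of `Φ` to `G + ℝχ` defined by `Φ(g + λχ) = Φ(g) + λ r` is a
positive linear functional: whenever `g + λχ ≥ 0` pointwise one has
`Φ(g) + λ r ≥ 0` (taking `λ = 0` this includes positivity of `Φ` on `G`). -/
theorem stmt3 {𝒳 : Type*} [Nonempty 𝒳] (G : Submodule ℝ (𝒳 → ℝ))
    (hconst : ∀ c : ℝ, (fun _ : 𝒳 => c) ∈ G)
    (χ : 𝒳 → ℝ) (hχ : ∀ X, 0 ≤ χ X)
    (Φ : G →ₗ[ℝ] ℝ) (r : ℝ)
    (hr : IsLUB {y : ℝ | ∃ g : G, (∀ X, (g : 𝒳 → ℝ) X ≤ χ X) ∧ Φ g = y} r) :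
    ∀ (g : G) (l : ℝ), (∀ X, 0 ≤ (g : 𝒳 → ℝ) X + l * χ X) → 0 ≤ Φ g + l * r := by
  -- positivity of Φ on G
  have pos : ∀ h : G, (∀ X, 0 ≤ (h : 𝒳 → ℝ) X) → 0 ≤ Φ h := by
    intro h hh
    have hub : r + Φ h ∈ upperBounds {y : ℝ | ∃ g : G, (∀ X, (g : 𝒳 → ℝ) X ≤ χ X) ∧ Φ g = y} := by
      rintro y ⟨g, hg, rfl⟩
      have hmem : Φ (g - h) ∈ {y : ℝ | ∃ g : G, (∀ X, (g : 𝒳 → ℝ) X ≤ χ X) ∧ Φ g = y} := by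
        refine ⟨g - h, fun X => ?_, rfl⟩
        have : ((g - h : G) : 𝒳 → ℝ) X = (g : 𝒳 → ℝ) X - (h : 𝒳 → ℝ) X := rfl
        rw [this]
        have := hh X
        have := hg X
        linarith
      have := hr.1 hmem
      rw [map_sub] at this
      linarith
    have := hr.2 hub
    linarith
  intro g l hgl
  rcases lt_trichotomy l 0 with hl | hl | hl
  · -- l < 0 : χ ≤ (-1/l) • g pointwise, so r ≤ (-1/l) Φ g
    have hub : (-1/l) * Φ g ∈ upperBounds {y : ℝ | ∃ g : G, (∀ X, (g : 𝒳 → ℝ) X ≤ χ X) ∧ Φ g = y} := by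
      rintro y ⟨f, hf, rfl⟩
      have hpos : 0 ≤ Φ ((-1/l) • g - f) := by
        apply pos
        intro X
        have h1 : ((((-1/l) • g - f : G)) : 𝒳 → ℝ) X = (-1/l) * (g : 𝒳 → ℝ) X - (f : 𝒳 → ℝ) X := rfl
        rw [h1]
        have h2 := hgl X
        have h3 := hf X
        -- χ X ≤ (-1/l) * g X since l * χ X ≥ - g X and l < 0
        have h4 : χ X ≤ (-1/l) * (g : 𝒳 → ℝ) X := by
          rw [div_mul_eq_mul_div, le_div_iff_of_neg hl]
          linarith [mul_comm l (χ X)]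
        linarith
      rw [map_sub, map_smul, smul_eq_mul] at hpos
      linarith
    have hle := hr.2 hub
    have : l * ((-1/l) * Φ g) ≤ l * r := by
      exact mul_le_mul_of_nonpos_left hle (le_of_lt hl)
    have hl' : l ≠ 0 := ne_of_lt hl
    have heq : l * (-1/l * Φ g) = -Φ g := by field_simp
    rw [heq] at this
    linarith
  · subst hl
    simp only [zero_mul, add_zero]
    apply pos
    intro X
    have := hgl X
    linarith
  · -- l > 0 : (-1/l) • g ≤ χ, so (-1/l) Φ g ≤ r
    have hmem : Φ ((-1/l) • g) ∈ {y : ℝ | ∃ g : G, (∀ X, (g : 𝒳 → ℝ) X ≤ χ X) ∧ Φ g = y} := by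
      refine ⟨(-1/l) • g, fun X => ?_, rfl⟩
      have h1 : (((-1/l) • g : G) : 𝒳 → ℝ) X = (-1/l) * (g : 𝒳 → ℝ) X := rfl
      rw [h1, div_mul_eq_mul_div, div_le_iff₀ hl]
      have := hgl X
      linarith [mul_comm l (χ X)]
    have hle := hr.1 hmem
    rw [map_smul, smul_eq_mul] at hle
    have : l * ((-1/l) * Φ g) ≤ l * r := mul_le_mul_of_nonneg_left hle (le_of_lt hl)
    have hl' : l ≠ 0 := ne_of_gt hl
    have heq : l * (-1/l * Φ g) = -Φ g := by field_simp
    rw [heq] at this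
    linarith
end

section
/- A function p : X → [0,1] on a metric space X is the one-point covering function of some random closed set (i.e. there exists a random closed set ξ with P(x ∈ ξ) = p(x) for all x) if and only if p is upper semicontinuous. In particular, if p is upper semicontinuous, then the random set ξ = {x : p(x) ≥ v}, where v is a uniform random variable on [0,1], is a closed random set realizing p. -/
open MeasureTheory

/-- A function `p : X → [0,1]` is the one-point covering function of a random
closed set (i.e. there is a probability space and a measurable-in-each-point
random closed set `ξ` with `P(x ∈ ξ) = p x` for all `x`) if and only if `p` is
upper semicontinuous. -/
theorem stmt5 {X : Type*} [MetricSpace X] [SecondCountableTopology X]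
    (p : X → ℝ) (hp0 : ∀ x, 0 ≤ p x) (hp1 : ∀ x, p x ≤ 1) :
    UpperSemicontinuous p ↔
      ∃ (Ω : Type) (_ : MeasurableSpace Ω) (P : Measure Ω) (_ : IsProbabilityMeasure P)
        (ξ : Ω → Set X),
          (∀ ω, IsClosed (ξ ω)) ∧
          (∀ x, MeasurableSet {ω | x ∈ ξ ω}) ∧
          (∀ x, P {ω | x ∈ ξ ω} = ENNReal.ofReal (p x)) := by
  constructor
  · intro hup
    refine ⟨ℝ, inferInstance, volume.restrict (Set.Ioc (0:ℝ) 1), ?_,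
      fun ω => {x | ω ≤ p x}, ?_, ?_, ?_⟩
    · constructor
      rw [Measure.restrict_apply_univ, Real.volume_Ioc]
      norm_num
    · intro ω
      exact (upperSemicontinuous_iff_isClosed_preimage.mp hup ω)
    · intro x
      have : {ω : ℝ | x ∈ {x' | ω ≤ p x'}} = Set.Iic (p x) := by
        ext ω; simp [Set.mem_Iic]
      rw [this]
      exact measurableSet_Iic
    · intro x
      have h1 : {ω : ℝ | x ∈ {x' | ω ≤ p x'}} = Set.Iic (p x) := by
        ext ω; simp [Set.mem_Iic]
      rw [h1, Measure.restrict_apply measurableSet_Iic]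
      have h2 : Set.Iic (p x) ∩ Set.Ioc (0:ℝ) 1 = Set.Ioc 0 (p x) := by
        ext ω
        simp only [Set.mem_inter_iff, Set.mem_Iic, Set.mem_Ioc]
        constructor
        · rintro ⟨h, h0, _⟩; exact ⟨h0, h⟩
        · rintro ⟨h0, h⟩; exact ⟨h, h0, h.trans (hp1 x)⟩
      rw [h2, Real.volume_Ioc, sub_zero]
  · rintro ⟨Ω, mΩ, P, hP, ξ, hclosed, hmeas, hPξ⟩
    intro x y hy
    by_contra hc
    have hfreq : ∃ᶠ x' in nhds x, y ≤ p x' := by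
      rw [Filter.not_eventually] at hc
      exact hc.mono (fun x' h => not_lt.mp h)
    have key : ∀ n : ℕ, ∃ x', y ≤ p x' ∧ dist x' x < 1 / (n + 1) := by
      intro n
      have hball : ∀ᶠ x' in nhds x, dist x' x < 1 / (n + 1) :=
        Metric.ball_mem_nhds x (by positivity)
      obtain ⟨x', h1, h2⟩ := (hfreq.and_eventually hball).exists
      exact ⟨x', h1, h2⟩
    choose xs h1 h2 using key
    have htend : Filter.Tendsto xs Filter.atTop (nhds x) := by
      rw [tendsto_iff_dist_tendsto_zero]
      exact squeeze_zero (fun n => dist_nonneg) (fun n => (h2 n).le)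
        tendsto_one_div_add_atTop_nhds_zero_nat
    set A : ℕ → Set Ω := fun n => {ω | xs n ∈ ξ ω} with hA
    set B : ℕ → Set Ω := fun N => ⋃ n ∈ Set.Ici N, A n with hB
    have hAmeas : ∀ n, MeasurableSet (A n) := fun n => hmeas (xs n)
    have hBmeas : ∀ N, MeasurableSet (B N) :=
      fun N => MeasurableSet.biUnion (Set.to_countable _) (fun n _ => hAmeas n)
    have hBanti : Antitone B := by
      intro M N hMN
      exact Set.biUnion_subset_biUnion_left (Set.Ici_subset_Ici.mpr hMN)
    have hsub : (⋂ N, B N) ⊆ {ω | x ∈ ξ ω} := by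
      intro ω hω
      have hfr : ∃ᶠ n in Filter.atTop, xs n ∈ ξ ω := by
        rw [Filter.frequently_atTop]
        intro N
        have := Set.mem_iInter.mp hω N
        simp only [hB, Set.mem_iUnion, Set.mem_Ici] at this
        obtain ⟨n, hn, hmem⟩ := this
        exact ⟨n, hn, hmem⟩
      exact (hclosed ω).mem_of_frequently_of_tendsto hfr htend
    have hPB : ∀ N, ENNReal.ofReal y ≤ P (B N) := by
      intro N
      calc ENNReal.ofReal y ≤ ENNReal.ofReal (p (xs N)) :=
            ENNReal.ofReal_le_ofReal (h1 N)
        _ = P (A N) := (hPξ (xs N)).symm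
        _ ≤ P (B N) := measure_mono (Set.subset_biUnion_of_mem (Set.mem_Ici.mpr le_rfl))
    have hIcap : P (⋂ N, B N) = ⨅ N, P (B N) :=
      Directed.measure_iInter (fun N => (hBmeas N).nullMeasurableSet)
        (hBanti.directed_ge) ⟨0, measure_ne_top P _⟩
    have hle : ENNReal.ofReal y ≤ P {ω | x ∈ ξ ω} := by
      calc ENNReal.ofReal y ≤ ⨅ N, P (B N) := le_iInf hPB
        _ = P (⋂ N, B N) := hIcap.symm
        _ ≤ P {ω | x ∈ ξ ω} := measure_mono hsub
    rw [hPξ x] at hle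
    have hy0 : 0 < y := lt_of_le_of_lt (hp0 x) hy
    exact absurd hle (not_le.mpr ((ENNReal.ofReal_lt_ofReal_iff hy0).mpr hy))
end

section
/- Let ξ be a random closed set in a separable metric space X whose two-point covering function has the product form: P(x,y ∈ ξ) = p_x·p_y for x ≠ y, where p_x = P(x ∈ ξ). Then for every x with p_x < 1 one has p_y → 0 as y → x (y ≠ x). -/
open MeasureTheory Topology Filter
open scoped ENNReal

/-- If a random closed set `ξ` in a separable metric space has two-point covering
function of product form `P(x ∈ ξ, y ∈ ξ) = p x * p y` for `x ≠ y`, then for every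
`x` with `p x < 1` one has `p y → 0` as `y → x`, `y ≠ x`. -/
theorem stmt6 {X : Type*} [MetricSpace X] [TopologicalSpace.SeparableSpace X]
    {Ω : Type*} [MeasurableSpace Ω] (P : Measure Ω) [IsProbabilityMeasure P]
    (ξ : Ω → Set X) (hclosed : ∀ ω, IsClosed (ξ ω))
    (hmeas : ∀ x, MeasurableSet {ω | x ∈ ξ ω})
    (p : X → ℝ≥0∞) (hp : ∀ x, p x = P {ω | x ∈ ξ ω})
    (hprod : ∀ x y, x ≠ y → P ({ω | x ∈ ξ ω} ∩ {ω | y ∈ ξ ω}) = p x * p y)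
    (x : X) (hx : p x < 1) :
    Filter.Tendsto p (𝓝[≠] x) (𝓝 0) := by
  have hc0 : (1 : ℝ≥0∞) - p x ≠ 0 := by
    simpa [tsub_eq_zero_iff_le] using hx.not_ge
  have hcinv : ((1 : ℝ≥0∞) - p x)⁻¹ ≠ ⊤ := ENNReal.inv_ne_top.mpr hc0
  rw [Filter.tendsto_iff_seq_tendsto]
  intro u hu
  have hu1 : Tendsto u atTop (𝓝 x) := hu.mono_right nhdsWithin_le_nhds
  have hu2 : ∀ᶠ n in atTop, u n ≠ x := hu self_mem_nhdsWithin
  set A : Set Ω := {ω | x ∈ ξ ω} with hA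
  set D : ℕ → Set Ω := fun n => {ω | u n ∈ ξ ω} \ A with hD
  set C : ℕ → Set Ω := fun n => ⋃ k ∈ Set.Ici n, D k with hC
  have hDmeas : ∀ n, MeasurableSet (D n) := fun n => (hmeas (u n)).diff (hmeas x)
  have hCmeas : ∀ n, MeasurableSet (C n) := fun n =>
    MeasurableSet.biUnion (Set.to_countable _) (fun k _ => hDmeas k)
  have hCanti : Antitone C := fun m n hmn =>
    Set.biUnion_subset_biUnion_left (Set.Ici_subset_Ici.mpr hmn)
  have hCempty : ⋂ n, C n = ∅ := by
    ext ω
    simp only [Set.mem_iInter, Set.mem_empty_iff_false, iff_false]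
    intro hω
    have hfreq : ∃ᶠ n in atTop, u n ∈ ξ ω := by
      rw [frequently_atTop]
      intro n
      obtain ⟨k, hk, hkmem⟩ := Set.mem_iUnion₂.1 (hω n)
      exact ⟨k, hk, hkmem.1⟩
    have hxω : x ∈ ξ ω :=
      (hclosed ω).closure_subset (mem_closure_of_frequently_of_tendsto hfreq hu1)
    obtain ⟨k, _, hkmem⟩ := Set.mem_iUnion₂.1 (hω 0)
    exact hkmem.2 hxω
  have hCt : Tendsto (fun n => P (C n)) atTop (𝓝 0) := by
    have := tendsto_measure_iInter_atTop (μ := P)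
      (fun n => (hCmeas n).nullMeasurableSet) hCanti ⟨0, measure_ne_top P _⟩
    rwa [hCempty, measure_empty] at this
  have hDt : Tendsto (fun n => P (D n)) atTop (𝓝 0) := by
    refine tendsto_of_tendsto_of_tendsto_of_le_of_le tendsto_const_nhds hCt
      (fun n => zero_le) (fun n => measure_mono ?_)
    exact Set.subset_biUnion_of_mem (Set.mem_Ici.mpr le_rfl)
  have hDval : ∀ᶠ n in atTop, P (D n) = p (u n) * (1 - p x) := by
    filter_upwards [hu2] with n hn
    have hsub : {ω | u n ∈ ξ ω} ∩ A ⊆ {ω | u n ∈ ξ ω} := Set.inter_subset_left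
    have : D n = {ω | u n ∈ ξ ω} \ ({ω | u n ∈ ξ ω} ∩ A) := by
      rw [hD]; ext ω; simp [hA]
    rw [this, measure_diff (Set.inter_subset_left)
      (((hmeas (u n)).inter (hmeas x)).nullMeasurableSet) (measure_ne_top P _),
      Set.inter_comm, hprod x (u n) (Ne.symm hn), ← hp (u n),
      ENNReal.mul_sub (fun _ _ => (hp (u n) ▸ measure_ne_top P _ : p (u n) ≠ ⊤)),
      mul_one, mul_comm]
  have hkey : ∀ᶠ n in atTop, p (u n) = P (D n) * (1 - p x)⁻¹ := by
    filter_upwards [hDval] with n hn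
    rw [hn, mul_assoc, ENNReal.mul_inv_cancel hc0 (by
      exact ne_top_of_le_ne_top ENNReal.one_ne_top tsub_le_self), mul_one]
  have := (ENNReal.Tendsto.mul_const hDt (Or.inr hcinv))
  rw [zero_mul] at this
  exact Filter.Tendsto.congr' (hkey.mono fun n h => h.symm) this
end

section
/- Let ξ be a random closed set in a separable metric space, x a point with p_x = P(x ∈ ξ) < 1, and suppose P(x_n ∈ ξ, x_m ∈ ξ) = p_{x_n} p_{x_m} for all n ≠ m for a sequence x_n → x, x_n ≠ x, and that the events {x_n ∈ ξ} are pairwise independent. If ∑_n p_{x_n} = ∞, then P(x ∈ ξ) = 1 — a contradiction; hence ∑_n p_{x_n} < ∞. -/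
open MeasureTheory Topology ProbabilityTheory Finset
open scoped ENNReal

lemma bc_pairwise {Ω : Type*} [MeasurableSpace Ω] (P : Measure Ω) [IsProbabilityMeasure P]
    (A : ℕ → Set Ω) (hA : ∀ n, MeasurableSet (A n))
    (hind : ∀ n m, n ≠ m → P (A n ∩ A m) = P (A n) * P (A m))
    (hsum : (∑' n, P (A n)) = ⊤) : P (⋃ n, A n) = 1 := by
  classical
  set p : ℕ → ℝ := fun k => (P (A k)).toReal with hp
  set f : ℕ → Ω → ℝ := fun k => (A k).indicator (fun _ => (1:ℝ)) with hf
  have hfin : ∀ k, P (A k) ≠ ⊤ := fun k => measure_ne_top P _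
  have hmemf : ∀ k, MemLp (f k) 2 P := fun k =>
    memLp_indicator_const 2 (hA k) 1 (Or.inr (hfin k))
  set S : ℕ → Ω → ℝ := fun n ω => ∑ k ∈ range n, f k ω with hS
  have hmemS : ∀ n, MemLp (S n) 2 P := by
    intro n
    have := memLp_finsetSum' (μ := P) (range n) (fun k _ => hmemf k)
    convert this using 1
    ext ω; simp [hS]
  have hEf : ∀ k, ∫ ω, f k ω ∂P = p k := by
    intro k
    simpa [hf, measureReal_def, Pi.one_def] using integral_indicator_one (μ := P) (hA k)
  set m : ℕ → ℝ := fun n => ∑ k ∈ range n, p k with hm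
  have hES : ∀ n, ∫ ω, S n ω ∂P = m n := by
    intro n
    rw [hS]
    rw [integral_finset_sum _ (fun k _ => (hmemf k).integrable one_le_two)]
    simp [hEf, hm]
  have hpnn : ∀ k, 0 ≤ p k := fun k => ENNReal.toReal_nonneg
  -- product of indicators
  have hfprod : ∀ i j, (fun ω => f i ω * f j ω) = (A i ∩ A j).indicator (fun _ => (1:ℝ)) := by
    intro i j
    ext ω
    by_cases hi : ω ∈ A i <;> by_cases hj : ω ∈ A j <;>
      simp [hf, Set.indicator_apply, hi, hj]
  have hprod : ∀ i j, ∫ ω, f i ω * f j ω ∂P = (P (A i ∩ A j)).toReal := by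
    intro i j
    rw [hfprod i j]
    simpa [measureReal_def, Pi.one_def] using integral_indicator_one (μ := P) ((hA i).inter (hA j))
  have hintfij : ∀ i j, Integrable (fun ω => f i ω * f j ω) P := by
    intro i j
    rw [hfprod i j]
    exact (memLp_indicator_const 1 ((hA i).inter (hA j)) 1
      (Or.inr (measure_ne_top P _))).integrable le_rfl
  have hvar : ∀ n, variance (S n) P ≤ m n := by
    intro n
    rw [variance_eq_sub (hmemS n)]
    have hint2 : ∫ ω, S n ω ^ 2 ∂P
        = ∑ i ∈ range n, ∑ j ∈ range n, (P (A i ∩ A j)).toReal := by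
      have hSq : (fun ω => S n ω ^ 2)
          = fun ω => ∑ i ∈ range n, ∑ j ∈ range n, f i ω * f j ω := by
        ext ω
        rw [hS, sq, Finset.sum_mul_sum]
      calc ∫ ω, S n ω ^ 2 ∂P
          = ∫ ω, ∑ i ∈ range n, ∑ j ∈ range n, f i ω * f j ω ∂P := by rw [← hSq]
        _ = ∑ i ∈ range n, ∑ j ∈ range n, (P (A i ∩ A j)).toReal := by
            rw [integral_finset_sum _ (fun i _ => integrable_finset_sum _ (fun j _ => hintfij i j))]
            refine Finset.sum_congr rfl fun i _ => ?_
            rw [integral_finset_sum _ (fun j _ => hintfij i j)]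
            exact Finset.sum_congr rfl fun j _ => hprod i j
    have hmsq : (∫ ω, S n ω ∂P) ^ 2 = ∑ i ∈ range n, ∑ j ∈ range n, p i * p j := by
      rw [hES, hm, sq, Finset.sum_mul_sum]
    have key : ∑ i ∈ range n, ∑ j ∈ range n, ((P (A i ∩ A j)).toReal - p i * p j)
        = ∑ i ∈ range n, (p i - p i ^ 2) := by
      refine Finset.sum_congr rfl fun i hi => ?_
      rw [Finset.sum_eq_single i]
      · simp [Set.inter_self, hp, sq]
      · intro j _ hji
        rw [hind i j (Ne.symm hji), ENNReal.toReal_mul, sub_self]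
      · intro h; exact absurd hi h
    have : P[(S n) ^ 2] - P[S n] ^ 2 = ∑ i ∈ range n, (p i - p i ^ 2) := by
      have h1 : P[(S n) ^ 2] = ∫ ω, S n ω ^ 2 ∂P := by rfl
      rw [h1, hint2, hmsq, ← Finset.sum_sub_distrib]
      rw [← key]
      refine Finset.sum_congr rfl fun i _ => ?_
      rw [Finset.sum_sub_distrib]
    rw [this]
    refine Finset.sum_le_sum fun i _ => ?_
    nlinarith [hpnn i, sq_nonneg (p i)]
  have cheb : ∀ n, 0 < m n → P ((⋃ k, A k)ᶜ) ≤ ENNReal.ofReal (4 / m n) := by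
    intro n hmn
    have h1 : P {ω | m n / 2 ≤ |S n ω - m n|}
        ≤ ENNReal.ofReal (variance (S n) P / (m n / 2) ^ 2) := by
      have := meas_ge_le_variance_div_sq (μ := P) (hmemS n) (c := m n / 2) (by linarith)
      rwa [hES] at this
    have hsub : (⋃ k, A k)ᶜ ⊆ {ω | m n / 2 ≤ |S n ω - m n|} := by
      intro ω hω
      have hS0 : S n ω = 0 := Finset.sum_eq_zero fun k _ => by
        have hk : ω ∉ A k := fun h => hω (Set.mem_iUnion.2 ⟨k, h⟩)
        simp [hf, hk]
      simp only [Set.mem_setOf_eq, hS0, zero_sub, abs_neg, abs_of_pos hmn]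
      linarith
    refine le_trans (measure_mono hsub) (le_trans h1 (ENNReal.ofReal_le_ofReal ?_))
    rw [div_le_div_iff₀ (by positivity) hmn]
    nlinarith [hvar n, variance_nonneg (S n) P]
  have hub : ∀ C : ℝ, ∃ n, C ≤ m n := by
    intro C
    by_contra h
    push_neg at h
    have hpart : ∀ n, (∑ k ∈ range n, P (A k)) ≤ ENNReal.ofReal C := by
      intro n
      have hne : (∑ k ∈ range n, P (A k)) ≠ ⊤ :=
        (ENNReal.sum_lt_top.2 fun k _ => (hfin k).lt_top).ne
      rw [← ENNReal.ofReal_toReal hne]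
      refine ENNReal.ofReal_le_ofReal ?_
      rw [ENNReal.toReal_sum fun k _ => hfin k]
      exact (h n).le
    rw [ENNReal.tsum_eq_iSup_nat] at hsum
    have : (⊤ : ℝ≥0∞) ≤ ENNReal.ofReal C := hsum ▸ iSup_le hpart
    exact (lt_irrefl _ (lt_of_le_of_lt this ENNReal.ofReal_lt_top))
  have hc0 : P ((⋃ k, A k)ᶜ) = 0 := by
    have hε : ∀ ε : ℝ, 0 < ε → P ((⋃ k, A k)ᶜ) ≤ ENNReal.ofReal ε := by
      intro ε hε
      obtain ⟨n, hn⟩ := hub (max 1 (4 / ε))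
      have hmn : 0 < m n := lt_of_lt_of_le one_pos (le_trans (le_max_left _ _) hn)
      refine le_trans (cheb n hmn) (ENNReal.ofReal_le_ofReal ?_)
      rw [div_le_iff₀ hmn]
      have h4 : 4 / ε ≤ m n := le_trans (le_max_right _ _) hn
      rw [div_le_iff₀ hε] at h4
      linarith
    refine le_antisymm ?_ zero_le
    refine ENNReal.le_of_forall_pos_le_add fun ε hε0 _ => ?_
    have := hε ε (by exact_mod_cast hε0)
    simpa [ENNReal.ofReal_coe_nnreal] using this
  have := prob_compl_eq_zero_iff (μ := P) (MeasurableSet.iUnion hA)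
  exact this.mp hc0

/-- For a random closed set `ξ` in a separable metric space, a point `x` with
`P(x ∈ ξ) < 1`, and a sequence `x n → x`, `x n ≠ x`, such that the events
`{x n ∈ ξ}` are pairwise independent, one necessarily has `∑ P(x n ∈ ξ) < ∞`
(otherwise Borel–Cantelli and closedness of `ξ` would force `P(x ∈ ξ) = 1`). -/
theorem stmt7 {X : Type*} [MetricSpace X] [TopologicalSpace.SeparableSpace X]
    {Ω : Type*} [MeasurableSpace Ω] (P : Measure Ω) [IsProbabilityMeasure P]
    (ξ : Ω → Set X) (hclosed : ∀ ω, IsClosed (ξ ω))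
    (hmeas : ∀ y, MeasurableSet {ω | y ∈ ξ ω})
    (x : X) (hx : P {ω | x ∈ ξ ω} < 1)
    (xs : ℕ → X) (hlim : Filter.Tendsto xs Filter.atTop (𝓝 x))
    (hne : ∀ n, xs n ≠ x)
    (hindep : ∀ n m, n ≠ m →
      P ({ω | xs n ∈ ξ ω} ∩ {ω | xs m ∈ ξ ω})
        = P {ω | xs n ∈ ξ ω} * P {ω | xs m ∈ ξ ω}) :
    (∑' n, P {ω | xs n ∈ ξ ω}) ≠ ⊤ := by
  intro hsum
  set A : ℕ → Set Ω := fun n => {ω | xs n ∈ ξ ω} with hA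
  have hAm : ∀ n, MeasurableSet (A n) := fun n => hmeas (xs n)
  have hshift : ∀ j, P (⋃ k, A (j + k)) = 1 := by
    intro j
    refine bc_pairwise P (fun k => A (j + k)) (fun k => hAm _)
      (fun n m hnm => hindep _ _ (by omega)) ?_
    have h := Summable.sum_add_tsum_nat_add' (f := fun n => P (A n)) (k := j) ENNReal.summable
    rw [hsum] at h
    have hfinpart : (∑ i ∈ range j, P (A i)) ≠ ⊤ :=
      (ENNReal.sum_lt_top.2 fun k _ => (measure_ne_top P _).lt_top).ne
    have htail : (∑' i, P (A (i + j))) = ⊤ := by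
      rcases ENNReal.add_eq_top.1 h with h' | h'
      · exact absurd h' hfinpart
      · exact h'
    rw [← htail]
    exact tsum_congr fun k => by rw [add_comm]
  set L : Set Ω := ⋂ j, ⋃ k, A (j + k) with hL
  have hLm : MeasurableSet L :=
    MeasurableSet.iInter fun j => MeasurableSet.iUnion fun k => hAm _
  have hPL : P L = 1 := by
    rw [← prob_compl_eq_zero_iff hLm]
    have : Lᶜ = ⋃ j, (⋃ k, A (j + k))ᶜ := by
      rw [hL, Set.compl_iInter]
    rw [this]
    refine measure_iUnion_null fun j => ?_
    rw [prob_compl_eq_zero_iff (MeasurableSet.iUnion fun k => hAm _)]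
    exact hshift j
  have hsubL : L ⊆ {ω | x ∈ ξ ω} := by
    intro ω hω
    have hfreq : ∃ᶠ n in Filter.atTop, xs n ∈ ξ ω := by
      rw [Filter.frequently_atTop]
      intro j
      obtain ⟨k, hk⟩ := Set.mem_iUnion.1 (Set.mem_iInter.1 hω j)
      exact ⟨j + k, Nat.le_add_right _ _, hk⟩
    have hx' := mem_closure_of_frequently_of_tendsto hfreq hlim
    rwa [(hclosed ω).closure_eq] at hx'
  have h1 : (1 : ℝ≥0∞) ≤ P {ω | x ∈ ξ ω} := hPL ▸ measure_mono hsubL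
  exact absurd hx (not_lt.2 h1)
end

section
/- In ℝᵈ, for every ε > 0, the family 𝓕^ε of all sets of the form F^ε = {x : dist(x,F) ≤ ε} for F closed (together with the empty set) is closed in the Fell topology on the space of closed subsets of ℝᵈ; in particular 𝓕^ε is compact. -/
open Metric

open Set TopologicalSpace in
section

/-- The Fell topology on the space of closed subsets of a topological space,
generated by the sets `{F : F ∩ K = ∅}` for `K` compact and
`{F : F ∩ U ≠ ∅}` for `U` open. -/
def fellTopology (X : Type*) [TopologicalSpace X] :
    TopologicalSpace {F : Set X // IsClosed F} :=
  TopologicalSpace.generateFrom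
    ({S | ∃ K : Set X, IsCompact K ∧ S = {F : {F : Set X // IsClosed F} | (↑F ∩ K) = ∅}} ∪
     {S | ∃ U : Set X, IsOpen U ∧ S = {F : {F : Set X // IsClosed F} | ((F : Set X) ∩ U).Nonempty}})

noncomputable section FellAux

variable {E : Type*} [NormedAddCommGroup E] [NormedSpace ℝ E]

/-- Segment point: a point within `ε` of `a` and within `dist a b - ε` of `b`. -/
lemma fell_seg_point (ε : ℝ) (hε : 0 ≤ ε) (a b : E) (h : ε ≤ dist a b) :
    ∃ c : E, dist c a ≤ ε ∧ dist c b ≤ dist a b - ε := by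
  rcases eq_or_lt_of_le (hε.trans h) with h0 | h0
  · refine ⟨a, by simpa using hε, ?_⟩
    have hd0 : dist a b = 0 := h0.symm
    have hε0 : ε = 0 := le_antisymm (h.trans_eq hd0) hε
    simp [hd0, hε0]
  · set D := dist a b with hD
    refine ⟨a + (ε / D) • (b - a), ?_, ?_⟩
    · have : dist (a + (ε / D) • (b - a)) a = (ε / D) * D := by
        rw [dist_eq_norm, add_sub_cancel_left, norm_smul, Real.norm_eq_abs,
          abs_of_nonneg (div_nonneg hε h0.le)]
        rw [hD, dist_eq_norm, norm_sub_rev]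
      rw [this, div_mul_cancel₀ _ h0.ne']
    · have key : a + (ε / D) • (b - a) - b = (1 - ε / D) • (a - b) := by
        rw [smul_sub, sub_smul, one_smul]
        module
      rw [dist_eq_norm, key, norm_smul, Real.norm_eq_abs,
        abs_of_nonneg (by rw [sub_nonneg]; exact div_le_one_of_le₀ h h0.le),
        ← dist_eq_norm, ← hD, sub_mul, one_mul, div_mul_cancel₀ _ h0.ne']

variable (ε : ℝ)

/-- The predicate characterizing `ε`-neighbourhoods (together with `∅`). -/
def FellP (F : Set E) : Prop :=
  ∀ x ∈ F, ∃ y : E, dist x y ≤ ε ∧ closedBall y ε ⊆ F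

lemma fellP_iff [ProperSpace E] (hε : 0 < ε) (F : Set E) (hF : IsClosed F) :
    (F = ∅ ∨ ∃ F₀ : Set E, IsClosed F₀ ∧ F₀.Nonempty ∧ F = {x | infDist x F₀ ≤ ε}) ↔
    FellP ε F := by
  constructor
  · rintro (rfl | ⟨F₀, h₀, hne, rfl⟩)
    · intro x hx; exact absurd hx (notMem_empty x)
    · intro x hx
      obtain ⟨y, hy, hxy⟩ := h₀.exists_infDist_eq_dist hne x
      refine ⟨y, by rw [← hxy]; exact hx, fun w hw => ?_⟩
      exact le_trans (infDist_le_dist_of_mem hy) hw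
  · intro hP
    rcases eq_empty_or_nonempty F with rfl | ⟨xb, hxb⟩
    · exact Or.inl rfl
    refine Or.inr ?_
    set F₀ : Set E := {y | closedBall y ε ⊆ F} with hF₀
    have hF₀closed : IsClosed F₀ := by
      have : F₀ = ⋂ v ∈ closedBall (0 : E) ε, (fun y => y + v) ⁻¹' F := by
        ext y
        simp only [hF₀, mem_setOf_eq, mem_iInter, mem_preimage, mem_closedBall]
        constructor
        · intro h v hv
          apply h
          rw [mem_closedBall, dist_eq_norm, add_sub_cancel_left]
          simpa [dist_eq_norm] using hv
        · intro h z hz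
          have h2 := h (z - y) (by simpa [dist_eq_norm] using hz)
          simpa using h2
      rw [this]
      exact isClosed_biInter fun v _ => hF.preimage (continuous_id.add continuous_const)
    obtain ⟨y₀, _, hy₀⟩ := hP xb hxb
    have hF₀ne : F₀.Nonempty := ⟨y₀, hy₀⟩
    refine ⟨F₀, hF₀closed, hF₀ne, ?_⟩
    ext x
    simp only [mem_setOf_eq]
    constructor
    · intro hx
      obtain ⟨y, hy1, hy2⟩ := hP x hx
      exact le_trans (infDist_le_dist_of_mem hy2) hy1
    · intro hx
      obtain ⟨y, hy, hxy⟩ := hF₀closed.exists_infDist_eq_dist hF₀ne x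
      exact hy (by rw [mem_closedBall, ← hxy]; exact hx)

end FellAux

section Fell2

variable {E : Type*} [NormedAddCommGroup E] [NormedSpace ℝ E] [ProperSpace E]

lemma fell_isClosed (ε : ℝ) (hε : 0 < ε) :
    @IsClosed {F : Set E // IsClosed F} (fellTopology E)
      {F : {F : Set E // IsClosed F} | FellP ε (F : Set E)} := by
  letI := fellTopology E
  rw [← isOpen_compl_iff, isOpen_iff_forall_mem_open]
  rintro ⟨F, hFcl⟩ hF
  simp only [mem_compl_iff, mem_setOf_eq, FellP, not_forall] at hF
  push_neg at hF
  obtain ⟨x₀, hx₀F, hx₀⟩ := hF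
  have hFne : F.Nonempty := ⟨x₀, hx₀F⟩
  -- choose witnesses z y ∉ F with dist (z y) y ≤ ε, for y in the ε-ball around x₀
  have h' : ∀ y : E, ∃ z : E, dist x₀ y ≤ ε → dist z y ≤ ε ∧ z ∉ F := by
    intro y
    by_cases hy : dist x₀ y ≤ ε
    · obtain ⟨w, hw⟩ := not_subset.mp (hx₀ y hy)
      exact ⟨w, fun _ => ⟨hw.1, hw.2⟩⟩
    · exact ⟨x₀, fun h => absurd h hy⟩
  choose z hz using h'
  set r : E → ℝ := fun y => infDist (z y) F / 4 with hr
  have rpos : ∀ y ∈ closedBall x₀ ε, 0 < r y := by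
    intro y hy
    have hyd : dist x₀ y ≤ ε := by rwa [mem_closedBall, dist_comm] at hy
    have := (hFcl.notMem_iff_infDist_pos hFne).mp (hz y hyd).2
    positivity
  -- finite subcover
  obtain ⟨t, htY, htcov⟩ := (isCompact_closedBall x₀ ε).elim_nhds_subcover
    (fun y => ball y (r y)) (fun y hy => ball_mem_nhds _ (rpos y hy))
  have hx₀Y : x₀ ∈ closedBall x₀ ε := mem_closedBall_self hε.le
  obtain ⟨y₁, hy₁⟩ := mem_iUnion₂.mp (htcov hx₀Y)
  have htne : t.Nonempty := ⟨y₁, hy₁.1⟩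
  set δ : ℝ := t.inf' htne r with hδ
  have δpos : 0 < δ := by
    rw [hδ, Finset.lt_inf'_iff]
    exact fun y hy => rpos y (htY y hy)
  have δle : ∀ y ∈ t, δ ≤ r y := fun y hy => Finset.inf'_le r hy
  -- disjointness of F from the balls around z y
  have hdisj : ∀ y ∈ t, F ∩ closedBall (z y) (2 * r y) = ∅ := by
    intro y hy
    rw [eq_empty_iff_forall_notMem]
    rintro w ⟨hwF, hwB⟩
    have h1 : infDist (z y) F ≤ dist (z y) w := infDist_le_dist_of_mem hwF
    have h2 : dist (z y) w ≤ 2 * r y := by rwa [dist_comm, ← mem_closedBall]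
    have h3 : 0 < r y := rpos y (htY y hy)
    have h4 : r y = infDist (z y) F / 4 := rfl
    linarith
  -- the open neighbourhood
  refine ⟨{G : {F : Set E // IsClosed F} | ((G : Set E) ∩ ball x₀ δ).Nonempty} ∩
      ⋂ y ∈ t, {G : {F : Set E // IsClosed F} | (G : Set E) ∩ closedBall (z y) (2 * r y) = ∅},
    ?_, ?_, ?_⟩
  · -- contained in the complement
    rintro ⟨G, hGcl⟩ ⟨⟨x', hx'G, hx'b⟩, hGd⟩
    rw [mem_iInter₂] at hGd
    intro hPG
    obtain ⟨y', hy'1, hy'2⟩ := hPG x' hx'G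
    have hdist : dist x₀ y' ≤ ε + δ := by
      have h1 : dist x₀ x' < δ := by rwa [mem_ball, dist_comm] at hx'b
      have := dist_triangle x₀ x' y'
      linarith
    -- find y ∈ t with dist y' y ≤ 2 * r y
    have hyy : ∃ y ∈ t, dist y' y ≤ 2 * r y := by
      by_cases hc : dist x₀ y' ≤ ε
      · have : y' ∈ closedBall x₀ ε := by rwa [mem_closedBall, dist_comm]
        obtain ⟨y, hyt, hy⟩ := mem_iUnion₂.mp (htcov this)
        refine ⟨y, hyt, ?_⟩
        have := mem_ball.mp hy
        have h3 : 0 < r y := rpos y (htY y hyt)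
        linarith
      · push_neg at hc
        obtain ⟨c, hc1, hc2⟩ := fell_seg_point ε hε.le x₀ y' hc.le
        have hcY : c ∈ closedBall x₀ ε := by rwa [mem_closedBall]
        obtain ⟨y, hyt, hy⟩ := mem_iUnion₂.mp (htcov hcY)
        refine ⟨y, hyt, ?_⟩
        have h1 : dist y' y ≤ dist y' c + dist c y := dist_triangle _ _ _
        have h2 : dist y' c ≤ δ := by rw [dist_comm]; linarith
        have h3 : dist c y < r y := mem_ball.mp hy
        have h4 : δ ≤ r y := δle y hyt
        linarith
    obtain ⟨y, hyt, hyy'⟩ := hyy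
    have hempty := hGd y hyt
    have hzyε : dist (z y) y ≤ ε := by
      have := htY y hyt
      rw [mem_closedBall, dist_comm] at this
      exact (hz y this).1
    -- produce a point of G in closedBall (z y) (2 * r y)
    simp only [mem_setOf_eq] at hempty
    rw [eq_empty_iff_forall_notMem] at hempty
    by_cases hD : dist y' (z y) ≤ ε
    · exact hempty (z y) ⟨hy'2 (mem_closedBall.mpr (by rwa [dist_comm])),
        mem_closedBall_self (by linarith [rpos y (htY y hyt)])⟩
    · push_neg at hD
      obtain ⟨w, hw1, hw2⟩ := fell_seg_point ε hε.le y' (z y) hD.le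
      have hDle : dist y' (z y) ≤ 2 * r y + ε := by
        have := dist_triangle y' y (z y)
        have h5 : dist y (z y) ≤ ε := by rwa [dist_comm] at hzyε
        linarith
      exact hempty w ⟨hy'2 (mem_closedBall.mpr hw1), mem_closedBall.mpr (by linarith)⟩
  · -- open
    apply IsOpen.inter
    · exact isOpen_generateFrom_of_mem (Or.inr ⟨ball x₀ δ, isOpen_ball, rfl⟩)
    · exact isOpen_biInter_finset fun y hy =>
        isOpen_generateFrom_of_mem (Or.inl ⟨closedBall (z y) (2 * r y),
          isCompact_closedBall _ _, rfl⟩)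
  · -- F belongs to it
    refine ⟨⟨x₀, hx₀F, mem_ball_self δpos⟩, ?_⟩
    rw [mem_iInter₂]
    exact fun y hy => hdisj y hy

end Fell2

lemma fell_compact_univ (X : Type*) [TopologicalSpace X] :
    @IsCompact {F : Set X // IsClosed F} (fellTopology X) univ := by
  letI := fellTopology X
  rw [isCompact_iff_ultrafilter_le_nhds]
  intro 𝒰 _
  set L : Set X := {x | ∀ U : Set X, IsOpen U → x ∈ U →
    {G : {F : Set X // IsClosed F} | ((G : Set X) ∩ U).Nonempty} ∈ 𝒰} with hLdef
  have hL : IsClosed L := by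
    rw [← isOpen_compl_iff, isOpen_iff_forall_mem_open]
    intro x hx
    simp only [hLdef, mem_compl_iff, mem_setOf_eq, not_forall] at hx
    obtain ⟨U, hU, hxU, hmem⟩ := hx
    exact ⟨U, fun x' hx' h => hmem (h U hU hx'), hU, hxU⟩
  refine ⟨⟨L, hL⟩, mem_univ _, ?_⟩
  have hn : @nhds {F : Set X // IsClosed F} (fellTopology X) ⟨L, hL⟩ =
      ⨅ s ∈ {s | (⟨L, hL⟩ : {F : Set X // IsClosed F}) ∈ s ∧ s ∈
        ({S | ∃ K : Set X, IsCompact K ∧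
            S = {F : {F : Set X // IsClosed F} | (↑F ∩ K) = ∅}} ∪
         {S | ∃ U : Set X, IsOpen U ∧
            S = {F : {F : Set X // IsClosed F} | ((F : Set X) ∩ U).Nonempty}})},
        Filter.principal s := nhds_generateFrom
  rw [hn]
  refine le_iInf₂ fun s hs => ?_
  rw [Filter.le_principal_iff]
  obtain ⟨haS, hSgen⟩ := hs
  rcases hSgen with ⟨K, hK, rfl⟩ | ⟨U, hU, rfl⟩
  · -- compact case
    simp only [mem_setOf_eq] at haS
    have h' : ∀ x : X, ∃ U : Set X, x ∈ K →
        IsOpen U ∧ x ∈ U ∧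
          {G : {F : Set X // IsClosed F} | ((G : Set X) ∩ U) = ∅} ∈ 𝒰 := by
      intro x
      by_cases hx : x ∈ K
      · have hxL : x ∉ L := fun h => (eq_empty_iff_forall_notMem.mp haS x) ⟨h, hx⟩
        simp only [hLdef, mem_setOf_eq, not_forall] at hxL
        obtain ⟨U, hU, hxU, hmem⟩ := hxL
        refine ⟨U, fun _ => ⟨hU, hxU, ?_⟩⟩
        have hcompl : {G : {F : Set X // IsClosed F} | ((G : Set X) ∩ U) = ∅} =
            {G : {F : Set X // IsClosed F} | ((G : Set X) ∩ U).Nonempty}ᶜ := by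
          ext G
          simp [not_nonempty_iff_eq_empty]
        rw [hcompl]
        exact Ultrafilter.compl_mem_iff_notMem.mpr hmem
      · exact ⟨univ, fun h => absurd h hx⟩
    choose U hU using h'
    obtain ⟨t, htK, htcov⟩ := hK.elim_nhds_subcover (fun x => U x)
      (fun x hx => ((hU x hx).1).mem_nhds (hU x hx).2.1)
    have hmem : (⋂ x ∈ t,
        {G : {F : Set X // IsClosed F} | ((G : Set X) ∩ U x) = ∅}) ∈ (𝒰 : Filter _) :=
      (Filter.biInter_finset_mem t).mpr fun x hx => (hU x (htK x hx)).2.2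
    refine Filter.mem_of_superset hmem ?_
    intro G hG
    simp only [mem_iInter, mem_setOf_eq] at hG ⊢
    rw [eq_empty_iff_forall_notMem]
    rintro w ⟨hwG, hwK⟩
    obtain ⟨x, hxt, hwU⟩ := mem_iUnion₂.mp (htcov hwK)
    exact (eq_empty_iff_forall_notMem.mp (hG x hxt) w) ⟨hwG, hwU⟩
  · -- open case
    obtain ⟨x, hxL, hxU⟩ := haS
    exact hxL U hU hxU

end

/-- In `ℝᵈ`, for every `ε > 0`, the family of closed `ε`-neighbourhoods of closed
sets (together with the empty set) is closed in the Fell topology on the space of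
closed subsets, and in particular it is compact. -/
theorem stmt9 (d : ℕ) (ε : ℝ) (hε : 0 < ε) :
    @IsClosed _ (fellTopology (EuclideanSpace ℝ (Fin d)))
      {F : {F : Set (EuclideanSpace ℝ (Fin d)) // IsClosed F} |
        (F : Set (EuclideanSpace ℝ (Fin d))) = ∅ ∨
        ∃ F₀ : Set (EuclideanSpace ℝ (Fin d)), IsClosed F₀ ∧ F₀.Nonempty ∧
          (F : Set (EuclideanSpace ℝ (Fin d))) = {x | infDist x F₀ ≤ ε}} ∧
    @IsCompact _ (fellTopology (EuclideanSpace ℝ (Fin d)))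
      {F : {F : Set (EuclideanSpace ℝ (Fin d)) // IsClosed F} |
        (F : Set (EuclideanSpace ℝ (Fin d))) = ∅ ∨
        ∃ F₀ : Set (EuclideanSpace ℝ (Fin d)), IsClosed F₀ ∧ F₀.Nonempty ∧
          (F : Set (EuclideanSpace ℝ (Fin d))) = {x | infDist x F₀ ≤ ε}} := by
  have key : {F : {F : Set (EuclideanSpace ℝ (Fin d)) // IsClosed F} |
      (F : Set (EuclideanSpace ℝ (Fin d))) = ∅ ∨
      ∃ F₀ : Set (EuclideanSpace ℝ (Fin d)), IsClosed F₀ ∧ F₀.Nonempty ∧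
        (F : Set (EuclideanSpace ℝ (Fin d))) = {x | infDist x F₀ ≤ ε}} =
      {F : {F : Set (EuclideanSpace ℝ (Fin d)) // IsClosed F} |
        FellP ε (F : Set (EuclideanSpace ℝ (Fin d)))} := by
    ext F
    exact fellP_iff ε hε (F : Set (EuclideanSpace ℝ (Fin d))) F.2
  constructor
  · rw [key]
    exact fell_isClosed ε hε
  · rw [key]
    exact @IsCompact.of_isClosed_subset _ (fellTopology _) _ _
      (fell_compact_univ _) (fell_isClosed ε hε) (Set.subset_univ _)
end

section
/- Let h : ℝᵈ × ℝᵈ → ℝ be continuous with compact support and define g_h(F) = ∫∫_{F×F} h(x,y) dx dy for closed F ⊆ ℝᵈ. Then g_h is upper semicontinuous on the space of closed subsets of ℝᵈ with the Fell topology, provided h ≥ 0. -/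
open Metric MeasureTheory

set_option maxHeartbeats 1000000 in
/-- For a nonnegative continuous compactly supported `h : ℝᵈ × ℝᵈ → ℝ`, the
functional `g_h(F) = ∫∫_{F×F} h(x,y) dx dy` is upper semicontinuous on the space
of closed subsets of `ℝᵈ` with the Fell topology. -/
theorem stmt11 (d : ℕ) (h : EuclideanSpace ℝ (Fin d) × EuclideanSpace ℝ (Fin d) → ℝ)
    (hcont : Continuous h) (hsupp : HasCompactSupport h) (hpos : ∀ p, 0 ≤ h p) :
    @UpperSemicontinuous _ ℝ (fellTopology (EuclideanSpace ℝ (Fin d))) _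
      (fun F : {F : Set (EuclideanSpace ℝ (Fin d)) // IsClosed F} =>
        ∫ p, Set.indicator ((F : Set (EuclideanSpace ℝ (Fin d))) ×ˢ
          (F : Set (EuclideanSpace ℝ (Fin d)))) h p) := by
  letI T := fellTopology (EuclideanSpace ℝ (Fin d))
  intro F y hy
  dsimp only at hy
  have hInt : Integrable h := hcont.integrable_of_hasCompactSupport hsupp
  -- the integral over cthickenings converges to the integral over F×F
  set g : Set (EuclideanSpace ℝ (Fin d)) → ℝ := fun s => ∫ p, Set.indicator (s ×ˢ s) h p with hg
  have hmeas : ∀ s : Set (EuclideanSpace ℝ (Fin d)), IsClosed s → MeasurableSet ((s ×ˢ s : Set ((EuclideanSpace ℝ (Fin d)) × (EuclideanSpace ℝ (Fin d)))))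
    := fun s hs => (hs.measurableSet).prod hs.measurableSet
  have htend : Filter.Tendsto (fun n : ℕ => g (cthickening (1 / (n + 1)) F))
      Filter.atTop (nhds (g F)) := by
    apply tendsto_integral_of_dominated_convergence h
    · intro n
      exact (hInt.indicator (hmeas _ isClosed_cthickening)).aestronglyMeasurable
    · exact hInt
    · intro n
      filter_upwards with p
      by_cases hp : p ∈ (cthickening (1 / (n + 1)) (F : Set (EuclideanSpace ℝ (Fin d)))) ×ˢ (cthickening (1 / (n + 1)) (F : Set (EuclideanSpace ℝ (Fin d))))
      · rw [Set.indicator_of_mem hp, Real.norm_eq_abs, abs_of_nonneg (hpos p)]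
      · rw [Set.indicator_of_notMem hp]
        simpa using hpos p
    · filter_upwards with p
      by_cases hp : p ∈ (F : Set (EuclideanSpace ℝ (Fin d))) ×ˢ (F : Set (EuclideanSpace ℝ (Fin d)))
      · have : ∀ n : ℕ, Set.indicator
            ((cthickening (1 / (n + 1)) (F : Set (EuclideanSpace ℝ (Fin d)))) ×ˢ (cthickening (1 / (n + 1)) (F : Set (EuclideanSpace ℝ (Fin d))))) h p
            = Set.indicator ((F : Set (EuclideanSpace ℝ (Fin d))) ×ˢ (F : Set (EuclideanSpace ℝ (Fin d)))) h p := by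
          intro n
          rw [Set.indicator_of_mem hp, Set.indicator_of_mem
            (Set.mem_prod.mpr ⟨self_subset_cthickening _ hp.1, self_subset_cthickening _ hp.2⟩)]
        simp only [this]
        exact tendsto_const_nhds
      · rw [Set.indicator_of_notMem hp]
        have hp' : p.1 ∉ (F : Set (EuclideanSpace ℝ (Fin d))) ∨ p.2 ∉ (F : Set (EuclideanSpace ℝ (Fin d))) := by
          by_contra hc
          push_neg at hc
          exact hp (Set.mem_prod.mpr ⟨hc.1, hc.2⟩)
        have key : ∀ᶠ n : ℕ in Filter.atTop,
            p ∉ (cthickening (1 / (n + 1)) (F : Set (EuclideanSpace ℝ (Fin d)))) ×ˢ (cthickening (1 / (n + 1)) (F : Set (EuclideanSpace ℝ (Fin d)))) := by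
          rcases hp' with hx | hx
          all_goals {
            have hx' := F.2.closure_eq ▸ hx
            have := tendsto_one_div_add_atTop_nhds_zero_nat.eventually
              (Metric.eventually_notMem_cthickening_of_infEdist_pos hx')
            filter_upwards [this] with n hn hmem
            first
              | exact hn hmem.1
              | exact hn hmem.2 }
        refine Filter.Tendsto.congr' ?_ tendsto_const_nhds
        filter_upwards [key] with n hn
        exact (Set.indicator_of_notMem hn h).symm
  -- choose δ with g (cthickening δ F) < y
  have : ∀ᶠ n : ℕ in Filter.atTop, g (cthickening (1 / (n + 1)) F) < y :=
    htend.eventually_lt_const hy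
  obtain ⟨n, hn⟩ := this.exists
  set δ : ℝ := 1 / (n + 1) with hδ
  have hδpos : 0 < δ := by positivity
  -- the Fell-open neighborhood
  set K0 : Set (EuclideanSpace ℝ (Fin d)) := Prod.fst '' tsupport h ∪ Prod.snd '' tsupport h with hK0
  have hK0c : IsCompact K0 := (hsupp.image continuous_fst).union (hsupp.image continuous_snd)
  set Kδ : Set (EuclideanSpace ℝ (Fin d)) := K0 \ thickening δ F with hKδ
  have hKδc : IsCompact Kδ := hK0c.diff isOpen_thickening
  set S : Set {F : Set (EuclideanSpace ℝ (Fin d)) // IsClosed F} := {F' | (↑F' ∩ Kδ : Set (EuclideanSpace ℝ (Fin d))) = ∅} with hS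
  have hSopen : IsOpen S := by
    rw [show T = fellTopology (EuclideanSpace ℝ (Fin d)) from rfl, fellTopology]
    exact TopologicalSpace.isOpen_generateFrom_of_mem (Or.inl ⟨Kδ, hKδc, rfl⟩)
  have hFS : F ∈ S := by
    rw [hS, Set.mem_setOf_eq, Set.eq_empty_iff_forall_notMem]
    rintro x ⟨hxF, hxK⟩
    exact hxK.2 (self_subset_thickening hδpos _ hxF)
  refine Filter.eventually_of_mem (hSopen.mem_nhds hFS) ?_
  intro F' hF'
  show (∫ p, Set.indicator ((F' : Set (EuclideanSpace ℝ (Fin d))) ×ˢ (F' : Set (EuclideanSpace ℝ (Fin d)))) h p) < y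
  have hsub : ∀ p : (EuclideanSpace ℝ (Fin d)) × (EuclideanSpace ℝ (Fin d)), Set.indicator ((F' : Set (EuclideanSpace ℝ (Fin d))) ×ˢ (F' : Set (EuclideanSpace ℝ (Fin d)))) h p ≤
      Set.indicator ((cthickening δ (F : Set (EuclideanSpace ℝ (Fin d)))) ×ˢ (cthickening δ (F : Set (EuclideanSpace ℝ (Fin d))))) h p := by
    intro p
    by_cases hp : p ∈ (F' : Set (EuclideanSpace ℝ (Fin d))) ×ˢ (F' : Set (EuclideanSpace ℝ (Fin d)))
    · rw [Set.indicator_of_mem hp]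
      by_cases hz : h p = 0
      · rw [hz]
        exact Set.indicator_nonneg (fun q _ => hpos q) p
      · have hpt : p ∈ tsupport h := subset_closure hz
        have h1 : p.1 ∈ cthickening δ (F : Set (EuclideanSpace ℝ (Fin d))) := by
          have hK : p.1 ∈ K0 := Or.inl ⟨p, hpt, rfl⟩
          have : p.1 ∉ Kδ := fun hc => by
            have := Set.eq_empty_iff_forall_notMem.mp hF' p.1
            exact this ⟨hp.1, hc⟩
          have : p.1 ∈ thickening δ (F : Set (EuclideanSpace ℝ (Fin d))) := by
            by_contra hc; exact this ⟨hK, hc⟩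
          exact thickening_subset_cthickening _ _ this
        have h2 : p.2 ∈ cthickening δ (F : Set (EuclideanSpace ℝ (Fin d))) := by
          have hK : p.2 ∈ K0 := Or.inr ⟨p, hpt, rfl⟩
          have : p.2 ∉ Kδ := fun hc => by
            have := Set.eq_empty_iff_forall_notMem.mp hF' p.2
            exact this ⟨hp.2, hc⟩
          have : p.2 ∈ thickening δ (F : Set (EuclideanSpace ℝ (Fin d))) := by
            by_contra hc; exact this ⟨hK, hc⟩
          exact thickening_subset_cthickening _ _ this
        rw [Set.indicator_of_mem (Set.mem_prod.mpr ⟨h1, h2⟩)]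
    · rw [Set.indicator_of_notMem hp]
      exact Set.indicator_nonneg (fun q _ => hpos q) p
  calc ∫ p, Set.indicator ((F' : Set (EuclideanSpace ℝ (Fin d))) ×ˢ (F' : Set (EuclideanSpace ℝ (Fin d)))) h p
      ≤ g (cthickening δ F) := by
        refine integral_mono (hInt.indicator (hmeas _ F'.2)) ?_ hsub
        exact hInt.indicator (hmeas _ isClosed_cthickening)
    _ < y := hn
end

section
/- Let χ_ε(Y) = ∑_{x≠y ∈ Y} ‖x − y‖^{−d−ε} over ordered pairs of distinct points of a finite point configuration Y in a compact set K ⊂ ℝᵈ, with ε > 0. Then for every λ > 0, the family of finite configurations Y ⊂ K with χ_ε(Y) ≤ λ·|Y|² has uniformly bounded cardinality and uniformly positive minimal interpoint distance. -/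
open scoped Classical

open scoped BigOperators

open Metric MeasureTheory
open scoped ENNReal

lemma pack_aux15 (d : ℕ) (hd : 0 < d) (K : Set (EuclideanSpace ℝ (Fin d))) (hK : IsCompact K) :
    ∃ c : ℝ, 0 < c ∧ ∀ t : ℝ, 0 < t → t ≤ 1 → ∀ S : Finset (EuclideanSpace ℝ (Fin d)),
      ↑S ⊆ K → (∀ x ∈ S, ∀ y ∈ S, x ≠ y → t < dist x y) → (S.card : ℝ) * t ^ d ≤ c := by
  haveI : Nontrivial (EuclideanSpace ℝ (Fin d)) :=
    Module.nontrivial_of_finrank_pos (R := ℝ) (by simp [finrank_euclideanSpace_fin, hd])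
  obtain ⟨R₀, hR₀⟩ := hK.isBounded.subset_closedBall 0
  set R : ℝ := max R₀ 0 with hRdef
  have hR : K ⊆ closedBall 0 R := hR₀.trans (closedBall_subset_closedBall (le_max_left _ _))
  set A : ℝ≥0∞ := volume (closedBall (0 : EuclideanSpace ℝ (Fin d)) (R + 1)) with hA
  set B : ℝ≥0∞ := volume (ball (0 : EuclideanSpace ℝ (Fin d)) 1) with hB
  have hAtop : A ≠ ⊤ := (isCompact_closedBall _ _).measure_lt_top.ne
  have hB0 : 0 < B := measure_ball_pos _ _ one_pos
  have hBtop : B ≠ ⊤ := measure_ball_lt_top.ne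
  have hBr : 0 < B.toReal := ENNReal.toReal_pos hB0.ne' hBtop
  refine ⟨A.toReal / B.toReal * 2 ^ d + 1, by positivity, fun t ht ht1 S hSK hsep => ?_⟩
  have hdisj : (↑S : Set (EuclideanSpace ℝ (Fin d))).PairwiseDisjoint
      (fun x => ball x (t / 2)) := by
    intro x hx y hy hxy
    have h := hsep x hx y hy hxy
    exact ball_disjoint_ball (by linarith)
  have hsub : ∀ x ∈ S, ball x (t / 2) ⊆ closedBall (0 : EuclideanSpace ℝ (Fin d)) (R + 1) := by
    intro x hx z hz
    have h1 : dist x 0 ≤ R := by simpa using hR (hSK hx)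
    have h2 : dist z x < t / 2 := hz
    have : dist z 0 ≤ dist z x + dist x 0 := dist_triangle _ _ _
    simp only [mem_closedBall]
    linarith
  have hmeas : (S.card : ℝ≥0∞) * (ENNReal.ofReal ((t / 2) ^ d) * B) ≤ A := by
    have h1 : ∑ x ∈ S, volume (ball x (t / 2)) =
        volume (⋃ x ∈ S, ball x (t / 2)) :=
      (measure_biUnion_finset hdisj fun _ _ => measurableSet_ball).symm
    have h2 : ∀ x ∈ S, volume (ball x (t / 2)) = ENNReal.ofReal ((t / 2) ^ d) * B := by
      intro x _
      rw [hB, Measure.addHaar_ball volume x (by positivity : (0:ℝ) ≤ t / 2),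
        finrank_euclideanSpace_fin]
    calc (S.card : ℝ≥0∞) * (ENNReal.ofReal ((t / 2) ^ d) * B)
        = ∑ x ∈ S, volume (ball x (t / 2)) := by
          rw [Finset.sum_congr rfl h2, Finset.sum_const, nsmul_eq_mul]
      _ = volume (⋃ x ∈ S, ball x (t / 2)) := h1
      _ ≤ A := measure_mono (Set.iUnion₂_subset hsub)
  have hreal : (S.card : ℝ) * ((t / 2) ^ d * B.toReal) ≤ A.toReal := by
    have h := ENNReal.toReal_mono hAtop hmeas
    simpa [ENNReal.toReal_mul,
      ENNReal.toReal_ofReal (by positivity : (0:ℝ) ≤ (t/2)^d)] using h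
  have h2d : (0:ℝ) < 2 ^ d := by positivity
  have key : (S.card : ℝ) * t ^ d ≤ A.toReal / B.toReal * 2 ^ d := by
    rw [div_mul_eq_mul_div, le_div_iff₀ hBr]
    have : (S.card : ℝ) * t ^ d * B.toReal = (S.card : ℝ) * ((t / 2) ^ d * B.toReal) * 2 ^ d := by
      field_simp
      rw [mul_assoc, ← mul_pow, div_mul_cancel₀ t two_ne_zero]
    rw [this]
    exact mul_le_mul_of_nonneg_right hreal h2d.le
  linarith

set_option maxHeartbeats 1000000

/-- For `χ_ε(Y) = ∑_{x ≠ y ∈ Y} ‖x - y‖^{-d-ε}` over ordered pairs of distinct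
points of a finite configuration `Y` in a compact `K ⊆ ℝᵈ` (`ε > 0`): for every
`lam > 0`, the configurations with `χ_ε(Y) ≤ lam |Y|²` have uniformly bounded
cardinality and uniformly positive minimal interpoint distance. -/
theorem stmt15 (d : ℕ) (ε : ℝ) (hε : 0 < ε)
    (K : Set (EuclideanSpace ℝ (Fin d))) (hK : IsCompact K)
    (lam : ℝ) (hlam : 0 < lam) :
    ∃ (N : ℕ) (δ : ℝ), 0 < δ ∧
      ∀ Y : Finset (EuclideanSpace ℝ (Fin d)), ↑Y ⊆ K →
        (∑ x ∈ Y, ∑ y ∈ Y, if x ≠ y then dist x y ^ (-((d : ℝ) + ε)) else 0)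
          ≤ lam * (Y.card : ℝ) ^ 2 →
        Y.card ≤ N ∧ ∀ x ∈ Y, ∀ y ∈ Y, x ≠ y → δ ≤ dist x y := by
  by_cases hd : d = 0
  · subst hd
    haveI : Subsingleton (EuclideanSpace ℝ (Fin 0)) :=
      ⟨fun a b => PiLp.ext fun i => i.elim0⟩
    refine ⟨1, 1, one_pos, fun Y _ _ => ?_⟩
    exact ⟨Finset.card_le_one.mpr fun a _ b _ => Subsingleton.elim a b,
      fun x _ y _ hxy => absurd (Subsingleton.elim x y) hxy⟩
  obtain ⟨c, hc0, hpack⟩ := pack_aux15 d (Nat.pos_of_ne_zero hd) K hK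
  set p : ℝ := -((d : ℝ) + ε) with hp
  have hdε : (0 : ℝ) < (d : ℝ) + ε := by positivity
  have hpneg : p < 0 := by rw [hp]; linarith
  set M : ℝ := 2 ^ ((d : ℝ) + ε + 1) * lam * (c + 1) with hM
  have hM0 : 0 < M := by
    have : (0:ℝ) < 2 ^ ((d : ℝ) + ε + 1) := Real.rpow_pos_of_pos two_pos _
    positivity
  set t : ℝ := min (M ^ (-ε⁻¹)) 1 with htdef
  have ht0 : 0 < t := lt_min (Real.rpow_pos_of_pos hM0 _) one_pos
  have ht1 : t ≤ 1 := min_le_right _ _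
  have htd : (0:ℝ) < t ^ d := pow_pos ht0 d
  have htM : M ≤ t ^ (-ε) := by
    have h1 : t ≤ M ^ (-ε⁻¹) := min_le_left _ _
    have h2 : (M ^ (-ε⁻¹)) ^ (-ε) ≤ t ^ (-ε) :=
      Real.rpow_le_rpow_of_nonpos ht0 h1 (by linarith)
    calc M = (M ^ (-ε⁻¹)) ^ (-ε) := by
          rw [← Real.rpow_mul hM0.le, neg_mul_neg, inv_mul_cancel₀ hε.ne', Real.rpow_one]
      _ ≤ t ^ (-ε) := h2
  set c' : ℝ := (2 * t) ^ p with hc'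
  have hc'0 : 0 < c' := Real.rpow_pos_of_pos (by linarith) _
  have hkey : 2 * lam * (c + 1) ≤ c' * t ^ d := by
    have e1 : c' * t ^ d = 2 ^ p * t ^ (-ε) := by
      rw [hc', Real.mul_rpow (by norm_num) ht0.le, ← Real.rpow_natCast t d, mul_assoc,
        ← Real.rpow_add ht0]
      rw [show p + (d : ℝ) = -ε by rw [hp]; ring]
    have e2 : 2 ^ p * M = 2 * lam * (c + 1) := by
      rw [hM, ← mul_assoc, ← mul_assoc, ← Real.rpow_add two_pos,
        show p + ((d : ℝ) + ε + 1) = 1 by rw [hp]; ring, Real.rpow_one]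
    rw [e1, ← e2]
    have : (0:ℝ) < (2:ℝ) ^ p := Real.rpow_pos_of_pos two_pos _
    exact mul_le_mul_of_nonneg_left htM this.le
  set N : ℕ := ⌈2 * (c + 1) / t ^ d⌉₊ with hN
  set A : ℝ := lam * ((N : ℝ) + 1) ^ 2 with hAdef
  have hA0 : 0 < A := by positivity
  refine ⟨N, A ^ p⁻¹, Real.rpow_pos_of_pos hA0 _, fun Y hYK hχ => ?_⟩
  have hterm_nonneg : ∀ x y : EuclideanSpace ℝ (Fin d),
      (0:ℝ) ≤ (if x ≠ y then dist x y ^ p else 0) := by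
    intro x y
    split
    · exact Real.rpow_nonneg dist_nonneg _
    · exact le_refl 0
  -- maximal separated subset
  classical
  set P := Y.powerset.filter
      (fun S => ∀ x ∈ S, ∀ y ∈ S, x ≠ y → t < dist x y) with hPdef
  have hPne : (∅ : Finset (EuclideanSpace ℝ (Fin d))) ∈ P := by
    simp [hPdef]
  obtain ⟨S, hSP, hSmax⟩ := P.exists_max_image Finset.card ⟨∅, hPne⟩
  have hSY : S ⊆ Y := Finset.mem_powerset.mp (Finset.mem_filter.mp hSP).1
  have hsep := (Finset.mem_filter.mp hSP).2
  have hm : (S.card : ℝ) * t ^ d ≤ c :=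
    hpack t ht0 ht1 S ((Finset.coe_subset.mpr hSY).trans hYK) hsep
  have hcover : ∀ y ∈ Y, ∃ s ∈ S, dist y s ≤ t := by
    intro y hy
    by_contra hcon
    push_neg at hcon
    have hyS : y ∉ S := by
      intro h
      have := hcon y h
      simp only [dist_self] at this
      linarith
    have hins : insert y S ∈ P := by
      rw [hPdef, Finset.mem_filter, Finset.mem_powerset]
      refine ⟨Finset.insert_subset hy hSY, ?_⟩
      intro a ha b hb hab
      rcases Finset.mem_insert.mp ha with rfl | ha'
      · rcases Finset.mem_insert.mp hb with rfl | hb'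
        · exact absurd rfl hab
        · exact hcon b hb'
      · rcases Finset.mem_insert.mp hb with rfl | hb'
        · rw [dist_comm]; exact hcon a ha'
        · exact hsep a ha' b hb' hab
    have := hSmax _ hins
    rw [Finset.card_insert_of_notMem hyS] at this
    omega
  set f : EuclideanSpace ℝ (Fin d) → EuclideanSpace ℝ (Fin d) :=
    fun y => if h : ∃ s ∈ S, dist y s ≤ t then h.choose else y with hfdef
  have hf : ∀ y ∈ Y, f y ∈ S ∧ dist y (f y) ≤ t := by
    intro y hy
    have h := hcover y hy
    rw [hfdef]
    simp only [dif_pos h]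
    exact ⟨h.choose_spec.1, h.choose_spec.2⟩
  set nn : EuclideanSpace ℝ (Fin d) → ℕ :=
    fun s => (Y.filter (fun y => f y = s)).card with hnn
  have hsum1 : ∑ s ∈ S, nn s = Y.card :=
    (Finset.card_eq_sum_card_fiberwise (fun y hy => (hf y hy).1)).symm
  have hsum1' : ∑ s ∈ S, (nn s : ℝ) = (Y.card : ℝ) := by exact_mod_cast hsum1
  have hCS : (Y.card : ℝ) ^ 2 ≤ (S.card : ℝ) * ∑ s ∈ S, (nn s : ℝ) ^ 2 := by
    have h := sq_sum_le_card_mul_sum_sq (s := S) (f := fun s => (nn s : ℝ))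
    rwa [hsum1'] at h
  have hQ : ∑ x ∈ Y, (nn (f x) : ℝ) = ∑ s ∈ S, (nn s : ℝ) ^ 2 := by
    rw [← Finset.sum_fiberwise_of_maps_to' (fun y hy => (hf y hy).1)
      (fun s => (nn s : ℝ))]
    refine Finset.sum_congr rfl fun s _ => ?_
    rw [Finset.sum_const, nsmul_eq_mul, sq]
  have hlow : c' * ((∑ s ∈ S, (nn s : ℝ) ^ 2) - Y.card) ≤
      ∑ x ∈ Y, ∑ y ∈ Y, (if x ≠ y then dist x y ^ p else 0) := by
    have hx1 : ∀ x ∈ Y, c' * ((nn (f x) : ℝ) - 1) ≤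
        ∑ y ∈ Y, (if x ≠ y then dist x y ^ p else 0) := by
      intro x hx
      have step1 : ∑ y ∈ Y, (if f y = f x ∧ x ≠ y then c' else 0) ≤
          ∑ y ∈ Y, (if x ≠ y then dist x y ^ p else 0) := by
        refine Finset.sum_le_sum fun y hy => ?_
        by_cases hcnd : f y = f x ∧ x ≠ y
        · rw [if_pos hcnd, if_pos hcnd.2]
          have h1 := (hf x hx).2
          have h2 := (hf y hy).2
          have h3 : dist (f x) y = dist y (f y) := by rw [← hcnd.1, dist_comm]
          have hdle : dist x y ≤ 2 * t := by
            calc dist x y ≤ dist x (f x) + dist (f x) y := dist_triangle _ _ _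
              _ ≤ 2 * t := by rw [h3]; linarith
          have hdpos : 0 < dist x y := dist_pos.mpr hcnd.2
          exact Real.rpow_le_rpow_of_nonpos hdpos hdle hpneg.le
        · rw [if_neg hcnd]
          exact hterm_nonneg x y
      have hfe : Y.filter (fun y => f y = f x ∧ x ≠ y) =
          (Y.filter (fun y => f y = f x)).erase x := by
        ext z
        simp only [Finset.mem_erase, Finset.mem_filter]
        constructor
        · rintro ⟨hz, h1, h2⟩; exact ⟨h2.symm, hz, h1⟩
        · rintro ⟨h2, hz, h1⟩; exact ⟨hz, h1, h2.symm⟩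
      have hxmem : x ∈ Y.filter (fun y => f y = f x) :=
        Finset.mem_filter.mpr ⟨hx, rfl⟩
      have hcard1 : 1 ≤ (Y.filter (fun y => f y = f x)).card :=
        Finset.card_pos.mpr ⟨x, hxmem⟩
      have step2 : ∑ y ∈ Y, (if f y = f x ∧ x ≠ y then c' else 0) =
          c' * ((nn (f x) : ℝ) - 1) := by
        rw [← Finset.sum_filter, hfe, Finset.sum_const, nsmul_eq_mul,
          Finset.card_erase_of_mem hxmem, Nat.cast_sub hcard1]
        rw [hnn]
        ring
      linarith [step1, step2.symm.le]
    calc c' * ((∑ s ∈ S, (nn s : ℝ) ^ 2) - Y.card)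
        = ∑ x ∈ Y, c' * ((nn (f x) : ℝ) - 1) := by
          rw [← Finset.mul_sum, Finset.sum_sub_distrib, Finset.sum_const,
            nsmul_eq_mul, mul_one, hQ]
      _ ≤ _ := Finset.sum_le_sum hx1
  -- derive cardinality bound
  have h1 : c' * (∑ s ∈ S, (nn s : ℝ) ^ 2) ≤ lam * (Y.card : ℝ) ^ 2 + c' * Y.card := by
    have := hlow.trans hχ
    linarith [this]
  have h3 : (S.card : ℝ) * lam ≤ c' / 2 := by
    have hmc : (S.card : ℝ) * t ^ d ≤ c + 1 := by linarith
    have h4 : 2 * lam * ((S.card : ℝ) * t ^ d) ≤ c' * t ^ d :=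
      le_trans (by nlinarith) hkey
    have h5 : (2 * lam * (S.card : ℝ)) * t ^ d ≤ c' * t ^ d := by linarith [h4]
    have h6 : 2 * lam * (S.card : ℝ) ≤ c' := le_of_mul_le_mul_right h5 htd
    linarith
  have hcardR : (Y.card : ℝ) ≤ 2 * (c + 1) / t ^ d := by
    rcases Nat.eq_zero_or_pos Y.card with h0 | hpos
    · rw [h0, Nat.cast_zero]; positivity
    have hnR : (0:ℝ) < (Y.card : ℝ) := by exact_mod_cast hpos
    have h2 : c' * (Y.card : ℝ) ^ 2 ≤ (S.card : ℝ) * (c' * ∑ s ∈ S, (nn s : ℝ) ^ 2) := by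
      have hh := mul_le_mul_of_nonneg_left hCS hc'0.le
      linarith [hh]
    have hmS : (0:ℝ) ≤ (S.card : ℝ) := Nat.cast_nonneg _
    have h6 : c' * (Y.card : ℝ) ^ 2 ≤
        (S.card : ℝ) * (lam * (Y.card : ℝ) ^ 2 + c' * Y.card) :=
      h2.trans (mul_le_mul_of_nonneg_left h1 hmS)
    have hA1 : (S.card : ℝ) * lam * (Y.card : ℝ) ^ 2 ≤ c' / 2 * (Y.card : ℝ) ^ 2 :=
      mul_le_mul_of_nonneg_right h3 (sq_nonneg _)
    have hx2 : c' / 2 * ((Y.card : ℝ) ^ 2) ≤ c' / 2 * (2 * (S.card : ℝ) * Y.card) := by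
      linarith [h6, hA1]
    have h7 : (Y.card : ℝ) ^ 2 ≤ 2 * (S.card : ℝ) * Y.card :=
      le_of_mul_le_mul_left hx2 (by positivity)
    have h8 : (Y.card : ℝ) ≤ 2 * (S.card : ℝ) := by
      have hx3 : (Y.card : ℝ) * (Y.card : ℝ) ≤ (2 * (S.card : ℝ)) * (Y.card : ℝ) := by
        nlinarith [h7]
      exact le_of_mul_le_mul_right hx3 hnR
    have h9 : (S.card : ℝ) ≤ (c + 1) / t ^ d := by
      rw [le_div_iff₀ htd]; linarith
    calc (Y.card : ℝ) ≤ 2 * (S.card : ℝ) := h8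
      _ ≤ 2 * ((c + 1) / t ^ d) := by linarith
      _ = 2 * (c + 1) / t ^ d := by ring
  have hcard : Y.card ≤ N := by
    have := hcardR.trans (Nat.le_ceil _)
    exact_mod_cast this
  refine ⟨hcard, fun x hx y hy hxy => ?_⟩
  -- minimal distance bound
  have hsingle : dist x y ^ p ≤
      ∑ x' ∈ Y, ∑ y' ∈ Y, (if x' ≠ y' then dist x' y' ^ p else 0) := by
    have hy' : dist x y ^ p ≤ ∑ y' ∈ Y, (if x ≠ y' then dist x y' ^ p else 0) := by
      have := Finset.single_le_sum
        (f := fun y' => if x ≠ y' then dist x y' ^ p else 0)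
        (fun i _ => hterm_nonneg x i) hy
      simpa [hxy] using this
    exact hy'.trans (Finset.single_le_sum
      (f := fun x' => ∑ y' ∈ Y, (if x' ≠ y' then dist x' y' ^ p else 0))
      (fun i _ => Finset.sum_nonneg fun j _ => hterm_nonneg i j) hx)
  have hnN : (Y.card : ℝ) ≤ (N : ℝ) + 1 := by
    have : (Y.card : ℝ) ≤ (N : ℝ) := by exact_mod_cast hcard
    linarith
  have hdA : dist x y ^ p ≤ A := by
    have : lam * (Y.card : ℝ) ^ 2 ≤ A := by
      rw [hAdef]
      have hn0 : (0:ℝ) ≤ (Y.card : ℝ) := Nat.cast_nonneg _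
      have hsq : (Y.card : ℝ) ^ 2 ≤ ((N : ℝ) + 1) ^ 2 := by nlinarith [hnN, hn0]
      exact mul_le_mul_of_nonneg_left hsq hlam.le
    exact (hsingle.trans hχ).trans this
  have hstep : A ^ p⁻¹ ≤ (dist x y ^ p) ^ p⁻¹ :=
    Real.rpow_le_rpow_of_nonpos (Real.rpow_pos_of_pos (dist_pos.mpr hxy) p) hdA
      (inv_nonpos.mpr hpneg.le)
  rwa [← Real.rpow_mul dist_nonneg, mul_inv_cancel₀ hpneg.ne, Real.rpow_one] at hstep
end

section
/- Let E be the family of functions F ↦ ∑_{i=1}^m a_i·1_{F ∩ B_{R_i}(x_i) ≠ ∅} on closed subsets F of ℝᵈ, where m ∈ ℕ, a_i ∈ ℝ, x_i ∈ ℝᵈ, R_i ≥ 0. If g(F) = ∑ a_i h_i(dist(x_i, F)) with h_i continuous of bounded support, and g ≥ 0 pointwise on all closed sets, then g can be approximated uniformly by functions ĝ ∈ E with ĝ ≥ −ε for arbitrary ε > 0; consequently, a linear functional Φ that is nonnegative on all nonnegative members of E and continuous under uniform approximation satisfies Φ(g) ≥ 0. -/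
open Metric
open scoped Classical BigOperators

/-- The family of finite linear combinations of ball-hitting indicators
`F ↦ ∑ aᵢ · 1_{F ∩ B_{Rᵢ}(xᵢ) ≠ ∅}` acting on subsets of `E`. -/
def hitFam (E : Type*) [MetricSpace E] : Set ((Set E) → ℝ) :=
  {v | ∃ (m : ℕ) (a : Fin m → ℝ) (x : Fin m → E) (R : Fin m → ℝ),
    (∀ i, 0 ≤ R i) ∧
    v = fun F => ∑ i, a i * (if (F ∩ closedBall (x i) (R i)).Nonempty then 1 else 0)}

lemma hitFam_of_fintype {E : Type*} [MetricSpace E] {ι : Type*} [Fintype ι]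
    (a : ι → ℝ) (x : ι → E) (R : ι → ℝ) (hR : ∀ i, 0 ≤ R i) :
    (fun F => ∑ i, a i * (if (F ∩ closedBall (x i) (R i)).Nonempty then 1 else 0))
      ∈ hitFam E := by
  classical
  let e := Fintype.equivFin ι
  refine ⟨Fintype.card ι, a ∘ e.symm, x ∘ e.symm, R ∘ e.symm, fun i => hR _, ?_⟩
  funext F
  exact (Equiv.sum_comp e.symm
    (fun i => a i * (if (F ∩ closedBall (x i) (R i)).Nonempty then 1 else 0))).symm

lemma hit_iff {E : Type*} [MetricSpace E] [ProperSpace E] {F : Set E} (hF : IsClosed F)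
    (y : E) (R : ℝ) :
    (F ∩ closedBall y R).Nonempty ↔ F.Nonempty ∧ infDist y F ≤ R := by
  constructor
  · rintro ⟨z, hzF, hz⟩
    rw [mem_closedBall, dist_comm] at hz
    exact ⟨⟨z, hzF⟩, le_trans (infDist_le_dist_of_mem hzF) hz⟩
  · rintro ⟨hne, hle⟩
    obtain ⟨z, hzF, hz⟩ := hF.exists_infDist_eq_dist hne y
    exact ⟨z, hzF, by rw [mem_closedBall, dist_comm, ← hz]; exact hle⟩

lemma step_approx (h : ℝ → ℝ) (hc : Continuous h) (hs : HasCompactSupport h)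
    {ε : ℝ} (hε : 0 < ε) :
    ∃ (n : ℕ) (c : Fin n → ℝ) (r : Fin n → ℝ), (∀ j, 0 ≤ r j) ∧
      ∀ t : ℝ, 0 ≤ t → |h t - ∑ j, c j * (if t ≤ r j then 1 else 0)| ≤ ε := by
  have huc := hs.uniformContinuous_of_continuous hc
  rw [Metric.uniformContinuous_iff] at huc
  obtain ⟨δ, hδ, hδ'⟩ := huc ε hε
  obtain ⟨M, hM⟩ := hs.isBounded.subset_closedBall 0
  set M₁ : ℝ := max M 0 + 1 with hM₁def
  have hM₁pos : 0 < M₁ := by positivity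
  have hzero : ∀ t : ℝ, M₁ ≤ t → h t = 0 := by
    intro t ht
    apply image_eq_zero_of_notMem_tsupport
    intro hmem
    have h1 := hM hmem
    rw [mem_closedBall, Real.dist_eq, sub_zero] at h1
    have h2 : t ≤ M := le_trans (le_abs_self t) h1
    have h3 : M < M₁ := by
      rw [hM₁def]
      have := le_max_left M (0:ℝ)
      linarith
    linarith
  set δ' : ℝ := δ / 2 with hδ'def
  have hδ'pos : 0 < δ' := half_pos hδ
  set N : ℕ := ⌈M₁ / δ'⌉₊ with hNdef
  have hNδ : M₁ ≤ N * δ' := by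
    have h1 : M₁ / δ' ≤ (N : ℝ) := Nat.le_ceil _
    calc M₁ = (M₁ / δ') * δ' := by field_simp
    _ ≤ N * δ' := by nlinarith
  set f : ℕ → ℝ := fun j => h (j * δ') with hfdef
  refine ⟨N + 1, fun j => f j - f (j + 1), fun j => (j : ℕ) * δ', fun j => by positivity, ?_⟩
  intro t ht
  set k : ℕ := ⌈t / δ'⌉₊ with hkdef
  have hind : ∀ j : ℕ, (t ≤ (j : ℝ) * δ') ↔ k ≤ j := by
    intro j
    rw [hkdef, Nat.ceil_le, div_le_iff₀ hδ'pos]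
  have hsum : ∑ j : Fin (N + 1), (f j - f ((j : ℕ) + 1)) * (if t ≤ (j : ℕ) * δ' then 1 else 0)
      = ∑ j ∈ Finset.Ico k (N + 1), (f j - f (j + 1)) := by
    rw [Fin.sum_univ_eq_sum_range
      (fun j : ℕ => (f j - f (j + 1)) * (if t ≤ (j : ℝ) * δ' then 1 else 0))]
    have hfil : (Finset.range (N + 1)).filter (fun j => k ≤ j) = Finset.Ico k (N + 1) := by
      ext j; simp [Finset.mem_filter, Finset.mem_Ico, Finset.mem_range]; omega
    rw [← hfil, Finset.sum_filter]
    apply Finset.sum_congr rfl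
    intro j _
    by_cases hj : k ≤ j
    · rw [if_pos hj, if_pos ((hind j).mpr hj), mul_one]
    · rw [if_neg hj, if_neg (fun hle => hj ((hind j).mp hle)), mul_zero]
  rw [hsum]
  by_cases hk : k ≤ N
  · -- telescoping
    have htel : ∑ j ∈ Finset.Ico k (N + 1), (f j - f (j + 1)) = f k - f (N + 1) := by
      rw [Finset.sum_Ico_eq_sum_range]
      have := Finset.sum_range_sub' (fun i => f (k + i)) (N + 1 - k)
      simp only [add_zero] at this
      rw [show (∑ i ∈ Finset.range (N + 1 - k), (f (k + i) - f (k + i + 1)))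
          = f k - f (N + 1) by
        have h2 : k + (N + 1 - k) = N + 1 := by omega
        calc ∑ i ∈ Finset.range (N + 1 - k), (f (k + i) - f (k + i + 1))
            = ∑ i ∈ Finset.range (N + 1 - k), ((fun i => f (k + i)) i - (fun i => f (k + i)) (i + 1)) := by
              rfl
          _ = f (k + 0) - f (k + (N + 1 - k)) := Finset.sum_range_sub' _ _
          _ = f k - f (N + 1) := by rw [add_zero, h2]]
    rw [htel]
    have hfN1 : f (N + 1) = 0 := by
      apply hzero
      push_cast
      nlinarith
    rw [hfN1, sub_zero]
    have h1 : t ≤ (k : ℝ) * δ' := by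
      rw [hkdef]
      have := Nat.le_ceil (t / δ')
      calc t = (t / δ') * δ' := by field_simp
      _ ≤ (⌈t / δ'⌉₊ : ℝ) * δ' := by nlinarith [Nat.le_ceil (t / δ')]
    have h2 : (k : ℝ) * δ' < t + δ := by
      have hc1 : (k : ℝ) < t / δ' + 1 := by
        rw [hkdef]
        exact Nat.ceil_lt_add_one (by positivity)
      have : (k : ℝ) * δ' < (t / δ' + 1) * δ' := by nlinarith
      have heq : (t / δ' + 1) * δ' = t + δ' := by field_simp
      rw [heq] at this
      linarith
    have hdist : dist t ((k : ℝ) * δ') < δ := by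
      rw [Real.dist_eq, abs_lt]
      constructor <;> linarith
    have := hδ' hdist
    rw [Real.dist_eq] at this
    exact le_of_lt this
  · -- k > N : sum empty and h t = 0
    rw [Finset.Ico_eq_empty (by omega), Finset.sum_empty, sub_zero]
    have hNt : (N : ℝ) * δ' < t := by
      by_contra hcon
      push_neg at hcon
      have : k ≤ N := by
        rw [hkdef, Nat.ceil_le, div_le_iff₀ hδ'pos]
        linarith
      omega
    have : h t = 0 := hzero t (by linarith)
    rw [this, abs_zero]
    exact le_of_lt hε

lemma strong_approx (d : ℕ) (m : ℕ) (a : Fin m → ℝ)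
    (x : Fin m → EuclideanSpace ℝ (Fin d)) (h : Fin m → ℝ → ℝ)
    (hcont : ∀ i, Continuous (h i)) (hsupp : ∀ i, HasCompactSupport (h i))
    (g : Set (EuclideanSpace ℝ (Fin d)) → ℝ)
    (hgdef : g = fun F => if F.Nonempty then ∑ i, a i * h i (infDist (x i) F) else 0)
    (hgpos : ∀ F, IsClosed F → 0 ≤ g F) :
    ∀ ε > (0:ℝ), ∃ v ∈ hitFam (EuclideanSpace ℝ (Fin d)),
      (∀ F, IsClosed F → 0 ≤ v F) ∧ (∀ F, IsClosed F → |g F - v F| ≤ ε) := by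
  intro ε hε
  set S : ℝ := ∑ i, |a i| with hSdef
  have hS : 0 ≤ S := Finset.sum_nonneg fun i _ => abs_nonneg _
  set ε' : ℝ := ε / (2 * (S + 1)) with hε'def
  have hε'pos : 0 < ε' := by rw [hε'def]; positivity
  choose n c r hr happ using fun i => step_approx (h i) (hcont i) (hsupp i) hε'pos
  set x₀ : EuclideanSpace ℝ (Fin d) := 0 with hx₀def
  set R0 : ℝ := ∑ p : (Σ i : Fin m, Fin (n i)), (dist x₀ (x p.1) + r p.1 p.2) with hR0def
  have hR0term : ∀ p : (Σ i : Fin m, Fin (n i)), dist x₀ (x p.1) + r p.1 p.2 ≤ R0 := by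
    intro p
    exact Finset.single_le_sum
      (f := fun q : (Σ i : Fin m, Fin (n i)) => dist x₀ (x q.1) + r q.1 q.2)
      (fun q _ => add_nonneg dist_nonneg (hr q.1 q.2)) (Finset.mem_univ p)
  have hR0nonneg : 0 ≤ R0 := Finset.sum_nonneg fun q _ => add_nonneg dist_nonneg (hr q.1 q.2)
  set A : (Σ i : Fin m, Fin (n i)) ⊕ Unit → ℝ :=
    Sum.elim (fun p => a p.1 * c p.1 p.2) (fun _ => ε / 2) with hAdef
  set X : (Σ i : Fin m, Fin (n i)) ⊕ Unit → EuclideanSpace ℝ (Fin d) :=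
    Sum.elim (fun p => x p.1) (fun _ => x₀) with hXdef
  set Rr : (Σ i : Fin m, Fin (n i)) ⊕ Unit → ℝ :=
    Sum.elim (fun p => r p.1 p.2) (fun _ => R0) with hRrdef
  set vmain : Set (EuclideanSpace ℝ (Fin d)) → ℝ := fun F =>
    ∑ p : (Σ i : Fin m, Fin (n i)), (a p.1 * c p.1 p.2) *
      (if (F ∩ closedBall (x p.1) (r p.1 p.2)).Nonempty then 1 else 0) with hvmaindef
  set v : Set (EuclideanSpace ℝ (Fin d)) → ℝ := fun F =>
    ∑ q, A q * (if (F ∩ closedBall (X q) (Rr q)).Nonempty then 1 else 0) with hvdef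
  have hmem : v ∈ hitFam (EuclideanSpace ℝ (Fin d)) := by
    rw [hvdef]
    refine hitFam_of_fintype A X Rr ?_
    rintro (p | u)
    · exact hr p.1 p.2
    · exact hR0nonneg
  have hv : ∀ F, v F = vmain F + ε / 2 *
      (if (F ∩ closedBall x₀ R0).Nonempty then 1 else 0) := by
    intro F
    rw [hvdef, hvmaindef]
    simp only [hAdef, hXdef, hRrdef, Fintype.sum_sum_type, Sum.elim_inl, Sum.elim_inr,
      Finset.univ_unique, Finset.sum_singleton]
    rfl
  have hmain : ∀ F, IsClosed F → |g F - vmain F| ≤ ε / 2 := by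
    intro F hF
    by_cases hne : F.Nonempty
    · have hg : g F = ∑ i, a i * h i (infDist (x i) F) := by
        rw [hgdef]; simp [hne]
      have hvm : vmain F = ∑ i, a i *
          ∑ j, c i j * (if infDist (x i) F ≤ r i j then 1 else 0) := by
        have hvb : vmain F = ∑ p : (Σ i : Fin m, Fin (n i)), (a p.1 * c p.1 p.2) *
            (if (F ∩ closedBall (x p.1) (r p.1 p.2)).Nonempty then 1 else 0) := rfl
        rw [hvb, ← Finset.univ_sigma_univ, Finset.sum_sigma]
        apply Finset.sum_congr rfl
        intro i _
        rw [Finset.mul_sum]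
        apply Finset.sum_congr rfl
        intro j _
        have hiff : (F ∩ closedBall (x i) (r i j)).Nonempty ↔ infDist (x i) F ≤ r i j := by
          rw [hit_iff hF]
          exact ⟨fun hh => hh.2, fun hh => ⟨hne, hh⟩⟩
        rw [mul_assoc, if_congr hiff rfl rfl]
      rw [hg, hvm]
      have heq : (∑ i, a i * h i (infDist (x i) F)) -
          (∑ i, a i * ∑ j, c i j * (if infDist (x i) F ≤ r i j then 1 else 0))
          = ∑ i, a i * (h i (infDist (x i) F) -
              ∑ j, c i j * (if infDist (x i) F ≤ r i j then 1 else 0)) := by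
        rw [← Finset.sum_sub_distrib]
        apply Finset.sum_congr rfl
        intro i _
        ring
      rw [heq]
      calc |∑ i, a i * (h i (infDist (x i) F) -
              ∑ j, c i j * (if infDist (x i) F ≤ r i j then 1 else 0))|
          ≤ ∑ i, |a i * (h i (infDist (x i) F) -
              ∑ j, c i j * (if infDist (x i) F ≤ r i j then 1 else 0))| :=
            Finset.abs_sum_le_sum_abs _ _
        _ ≤ ∑ i, |a i| * ε' := by
            apply Finset.sum_le_sum
            intro i _
            rw [abs_mul]
            exact mul_le_mul_of_nonneg_left
              (happ i (infDist (x i) F) infDist_nonneg) (abs_nonneg _)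
        _ = S * ε' := by rw [← Finset.sum_mul]
        _ ≤ ε / 2 := by
            have hu : ε' * (2 * (S + 1)) = ε := by
              rw [hε'def]; field_simp
            nlinarith [hε'pos.le, hS]
    · have hF0 : F = ∅ := Set.not_nonempty_iff_eq_empty.mp hne
      have hg : g F = 0 := by rw [hgdef]; simp [hne]
      have hvm : vmain F = 0 := by
        apply Finset.sum_eq_zero
        intro p _
        rw [if_neg, mul_zero]
        rw [hF0]
        simp
      rw [hg, hvm, sub_zero, abs_zero]
      linarith
  have hmiss : ∀ F, ¬(F ∩ closedBall x₀ R0).Nonempty → vmain F = 0 := by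
    intro F hmiss
    apply Finset.sum_eq_zero
    intro p _
    rw [if_neg, mul_zero]
    rintro ⟨z, hzF, hz⟩
    apply hmiss
    refine ⟨z, hzF, ?_⟩
    rw [mem_closedBall] at hz ⊢
    have h1 : dist z x₀ ≤ dist z (x p.1) + dist (x p.1) x₀ := dist_triangle _ _ _
    have h2 : dist (x p.1) x₀ = dist x₀ (x p.1) := dist_comm _ _
    have h3 := hR0term p
    linarith
  refine ⟨v, hmem, ?_, ?_⟩
  · intro F hF
    rw [hv]
    by_cases hbig : (F ∩ closedBall x₀ R0).Nonempty
    · rw [if_pos hbig, mul_one]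
      have h1 := abs_le.mp (hmain F hF)
      have h2 := hgpos F hF
      linarith [h1.1, h1.2]
    · rw [if_neg hbig, mul_zero, hmiss F hbig]
      norm_num
  · intro F hF
    rw [hv]
    by_cases hbig : (F ∩ closedBall x₀ R0).Nonempty
    · rw [if_pos hbig, mul_one]
      have h1 := abs_le.mp (hmain F hF)
      rw [abs_le]
      constructor <;> linarith [h1.1, h1.2]
    · rw [if_neg hbig, mul_zero, hmiss F hbig]
      have h1 := hmain F hF
      rw [hmiss F hbig] at h1
      rw [add_zero]
      calc |g F - 0| ≤ ε / 2 := h1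
        _ ≤ ε := by linarith

/-- If `g(F) = ∑ aᵢ hᵢ(dist(xᵢ, F))` with `hᵢ` continuous of compact support and
`g ≥ 0` on closed sets, then `g` can be approximated uniformly (on closed sets) by
members `ĝ` of the ball-hitting family with `ĝ ≥ -ε`; consequently any linear
functional `Φ`, nonnegative on nonnegative members of the family and continuous
under uniform approximation of `g`, satisfies `Φ g ≥ 0`. -/
theorem stmt19 (d : ℕ) (m : ℕ) (a : Fin m → ℝ)
    (x : Fin m → EuclideanSpace ℝ (Fin d)) (h : Fin m → ℝ → ℝ)
    (hcont : ∀ i, Continuous (h i)) (hsupp : ∀ i, HasCompactSupport (h i))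
    (g : Set (EuclideanSpace ℝ (Fin d)) → ℝ)
    (hgdef : g = fun F => if F.Nonempty then ∑ i, a i * h i (infDist (x i) F) else 0)
    (hgpos : ∀ F, IsClosed F → 0 ≤ g F) :
    (∀ ε > (0:ℝ), ∃ v ∈ hitFam (EuclideanSpace ℝ (Fin d)),
      (∀ F, IsClosed F → -ε ≤ v F) ∧ (∀ F, IsClosed F → |g F - v F| ≤ ε)) ∧
    (∀ Φ : ((Set (EuclideanSpace ℝ (Fin d))) → ℝ) →ₗ[ℝ] ℝ,
      (∀ v ∈ hitFam (EuclideanSpace ℝ (Fin d)),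
        (∀ F, IsClosed F → 0 ≤ v F) → 0 ≤ Φ v) →
      (∀ u : ℕ → (Set (EuclideanSpace ℝ (Fin d))) → ℝ,
        (∀ n, u n ∈ hitFam (EuclideanSpace ℝ (Fin d))) →
        (∀ δ > (0:ℝ), ∃ N, ∀ n ≥ N, ∀ F, IsClosed F → |u n F - g F| ≤ δ) →
        Filter.Tendsto (fun n => Φ (u n)) Filter.atTop (nhds (Φ g))) →
      0 ≤ Φ g) := by
  have strong := strong_approx d m a x h hcont hsupp g hgdef hgpos
  constructor
  · intro ε hε
    obtain ⟨v, hv1, hv2, hv3⟩ := strong ε hε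
    exact ⟨v, hv1, fun F hF => le_trans (by linarith) (hv2 F hF), hv3⟩
  · intro Φ hpos hΦcont
    have hseq : ∀ nn : ℕ, ∃ v, v ∈ hitFam (EuclideanSpace ℝ (Fin d)) ∧
        (∀ F, IsClosed F → 0 ≤ v F) ∧
        (∀ F, IsClosed F → |g F - v F| ≤ 1 / (nn + 1)) := by
      intro nn
      obtain ⟨v, hv1, hv2, hv3⟩ := strong (1 / (nn + 1)) (by positivity)
      exact ⟨v, hv1, hv2, hv3⟩
    choose u hu1 hu2 hu3 using hseq
    have htend := hΦcont u hu1 ?_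
    · exact ge_of_tendsto' htend fun nn => hpos (u nn) (hu1 nn) (hu2 nn)
    · intro δ hδ
      obtain ⟨N, hN⟩ := exists_nat_one_div_lt hδ
      refine ⟨N, fun nn hnn F hF => ?_⟩
      have h1 := hu3 nn F hF
      rw [abs_sub_comm] at h1
      have h2 : (1 : ℝ) / (nn + 1) ≤ 1 / (N + 1) := by
        apply one_div_le_one_div_of_le
        · positivity
        · exact_mod_cast Nat.add_le_add_right hnn 1
      linarith
end
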